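/- arXiv:1512.06076 — 12 statements merged into one kernel-verified Lean document; each statement's English description precedes it below -/
import Mathlib

section
/- Let N ≥ 1 and a, b ∈ ℂ \ {0} with |b| ≤ |a|, and let P_I be the N×N bidiagonal Toeplitz matrix. Then the numerical range of P_I, i.e. the set {⟨P_I u, u⟩ : u ∈ ℂ^N, ‖u‖ = 1}, is contained in the convex hull of the ellipse E₁ = {a e^{iξ} + b e^{-iξ} : ξ ∈ ℝ}; equivalently, for any c ∈ ℂ with c² = 4ab, it is contained in the filled ellipse {z ∈ ℂ : |z − c| + |z + c| ≤ 2(|a| + |b|)}. -/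
open Matrix
noncomputable section

/-- The N×N bidiagonal Toeplitz matrix with `a` on the first superdiagonal and
`b` on the first subdiagonal. -/
def PIMatrix (N : ℕ) (a b : ℂ) : Matrix (Fin N) (Fin N) ℂ :=
  fun j k => if (j : ℕ) + 1 = (k : ℕ) then a else if (k : ℕ) + 1 = (j : ℕ) then b else 0

/-!
With the shift `S = PIMatrix N 1 0` we have `P_I = a • S + b • Sᴴ`, so `⟨P_I u, u⟩ = a s + b s̄`
where `s = ⟨S u, u⟩`, and `‖s‖ ≤ 1` by the Schur test since `S` has at most one unit entry in
each row and column. It remains to see that `s ↦ a s + b s̄` maps the unit disc into the filled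
ellipse. Put `z = a s + b s̄`, `w = a s - b s̄`; the identities
`(‖z - c‖ + ‖z + c‖)² = 2 (‖z‖² + ‖c‖²) + 2 ‖z² - c²‖`, `‖z‖² + ‖w‖² = 2 (‖a‖² + ‖b‖²) ‖s‖²` and
`z² - c² = w² + 4ab (s s̄ - 1)` give
`(‖z - c‖ + ‖z + c‖)² ≤ 4 (‖a‖ + ‖b‖)² - 4 (1 - ‖s‖²) (‖a‖ - ‖b‖)²`.
-/

open ComplexConjugate

theorem norm_sub_add_norm_add_sq (z c : ℂ) :
    (‖z - c‖ + ‖z + c‖) ^ 2 = 2 * (‖z‖ ^ 2 + ‖c‖ ^ 2) + 2 * ‖z ^ 2 - c ^ 2‖ := by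
  have hpar := parallelogram_law_with_norm ℝ z c
  have hprod : ‖z ^ 2 - c ^ 2‖ = ‖z + c‖ * ‖z - c‖ := by rw [sq_sub_sq, norm_mul]
  rw [hprod]
  linear_combination hpar

theorem norm_sub_add_norm_add_le_of_norm_le_one {a b c s : ℂ} (hc : c ^ 2 = 4 * a * b)
    (hs : ‖s‖ ≤ 1) :
    ‖a * s + b * conj s - c‖ + ‖a * s + b * conj s + c‖ ≤ 2 * (‖a‖ + ‖b‖) := by
  set z := a * s + b * conj s
  set w := a * s - b * conj s
  have hs2 : ‖s‖ ^ 2 ≤ 1 := pow_le_one₀ (norm_nonneg s) hs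
  have hzw : ‖z‖ ^ 2 + ‖w‖ ^ 2 = 2 * (‖a‖ ^ 2 + ‖b‖ ^ 2) * ‖s‖ ^ 2 := by
    have := parallelogram_law_with_norm ℝ (a * s) (b * conj s)
    simp only [norm_mul, Complex.norm_conj] at this
    linear_combination this
  have hmul_conj : ‖s * conj s - 1‖ = 1 - ‖s‖ ^ 2 := by
    rw [Complex.mul_conj', ← Complex.ofReal_pow, ← Complex.ofReal_one, ← Complex.ofReal_sub,
      Complex.norm_real, Real.norm_of_nonpos (by linarith)]
    ring
  have hdisc : ‖z ^ 2 - c ^ 2‖ ≤ ‖w‖ ^ 2 + 4 * ‖a‖ * ‖b‖ * (1 - ‖s‖ ^ 2) := by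
    have : z ^ 2 - c ^ 2 = w ^ 2 + 4 * a * b * (s * conj s - 1) := by
      rw [hc]; ring
    rw [this]
    refine (norm_add_le _ _).trans_eq ?_
    simp [hmul_conj]
  have hc' : ‖c‖ ^ 2 = 4 * ‖a‖ * ‖b‖ := by
    simpa [norm_mul] using congrArg norm hc
  have hsq : (‖z - c‖ + ‖z + c‖) ^ 2 ≤ (2 * (‖a‖ + ‖b‖)) ^ 2 := by
    rw [norm_sub_add_norm_add_sq]
    nlinarith [mul_nonneg (sub_nonneg.2 hs2) (sq_nonneg (‖a‖ - ‖b‖))]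
  exact (pow_le_pow_iff_left₀ (by positivity) (by positivity) two_ne_zero).1 hsq

theorem norm_star_dotProduct_mulVec_le {𝕜 n : Type*} [RCLike 𝕜] [Fintype n]
    (A : Matrix n n 𝕜) (u : n → 𝕜) {r : ℝ}
    (hrow : ∀ i, ∑ j, ‖A i j‖ ≤ r) (hcol : ∀ j, ∑ i, ‖A i j‖ ≤ r) :
    ‖star u ⬝ᵥ (A *ᵥ u)‖ ≤ r * ∑ i, ‖u i‖ ^ 2 := by
  have hamgm : ∀ i j, ‖star (u i) * (A i j * u j)‖ ≤ ‖A i j‖ * (‖u i‖ ^ 2 + ‖u j‖ ^ 2) / 2 := by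
    intro i j
    rw [norm_mul, norm_mul, norm_star]
    nlinarith [norm_nonneg (A i j), sq_nonneg (‖u i‖ - ‖u j‖)]
  calc ‖star u ⬝ᵥ (A *ᵥ u)‖ = ‖∑ i, ∑ j, star (u i) * (A i j * u j)‖ := by
        simp only [dotProduct, mulVec, Finset.mul_sum, Pi.star_apply]
    _ ≤ ∑ i, ∑ j, ‖A i j‖ * (‖u i‖ ^ 2 + ‖u j‖ ^ 2) / 2 :=
        (norm_sum_le _ _).trans <| Finset.sum_le_sum fun i _ =>
          (norm_sum_le _ _).trans <| Finset.sum_le_sum fun j _ => hamgm i j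
    _ = (∑ i, ‖u i‖ ^ 2 * ∑ j, ‖A i j‖ + ∑ j, ‖u j‖ ^ 2 * ∑ i, ‖A i j‖) / 2 := by
        simp only [Finset.mul_sum, ← Finset.sum_div, mul_add, Finset.sum_add_distrib]
        rw [Finset.sum_comm (f := fun i j => ‖A i j‖ * ‖u j‖ ^ 2)]
        congr 2 <;> simp only [mul_comm]
    _ ≤ (∑ i, ‖u i‖ ^ 2 * r + ∑ j, ‖u j‖ ^ 2 * r) / 2 := by
        gcongr with i _ j _
        exacts [hrow i, hcol j]
    _ = r * ∑ i, ‖u i‖ ^ 2 := by rw [← Finset.sum_mul]; ring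

theorem star_dotProduct_conjTranspose_mulVec {𝕜 n : Type*} [RCLike 𝕜] [Fintype n]
    (A : Matrix n n 𝕜) (u : n → 𝕜) :
    star u ⬝ᵥ (Aᴴ *ᵥ u) = star (star u ⬝ᵥ (A *ᵥ u)) := by
  rw [star_dotProduct, star_mulVec, conjTranspose_conjTranspose, dotProduct_mulVec]

theorem PIMatrix_eq_smul_add_smul_conjTranspose (N : ℕ) (a b : ℂ) :
    PIMatrix N a b = a • PIMatrix N 1 0 + b • (PIMatrix N 1 0)ᴴ := by
  ext j k
  simp only [Matrix.add_apply, Matrix.smul_apply, conjTranspose_apply, PIMatrix]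
  split_ifs <;> first | omega | simp

theorem norm_PIMatrix_one_zero_apply (N : ℕ) (j k : Fin N) :
    ‖PIMatrix N 1 0 j k‖ = if (j : ℕ) + 1 = k then 1 else 0 := by
  unfold PIMatrix; split_ifs <;> simp

theorem sum_norm_PIMatrix_one_zero_row_le (N : ℕ) (j : Fin N) :
    ∑ k, ‖PIMatrix N 1 0 j k‖ ≤ 1 := by
  simp only [norm_PIMatrix_one_zero_apply, Finset.sum_boole, Nat.cast_le_one]
  exact Finset.card_le_one.2 fun k hk l hl => by
    simp only [Finset.mem_filter] at hk hl; exact Fin.ext (by omega)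

theorem sum_norm_PIMatrix_one_zero_col_le (N : ℕ) (k : Fin N) :
    ∑ j, ‖PIMatrix N 1 0 j k‖ ≤ 1 := by
  simp only [norm_PIMatrix_one_zero_apply, Finset.sum_boole, Nat.cast_le_one]
  exact Finset.card_le_one.2 fun j hj l hl => by
    simp only [Finset.mem_filter] at hj hl; exact Fin.ext (by omega)

theorem numerical_range_PI_subset_filled_ellipse_general
    (N : ℕ) (a b : ℂ)
    (c : ℂ) (hc : c ^ 2 = 4 * a * b)
    (u : Fin N → ℂ) (hu : ∑ i, ‖u i‖ ^ 2 = 1) :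
    ‖(star u ⬝ᵥ (PIMatrix N a b *ᵥ u)) - c‖
      + ‖(star u ⬝ᵥ (PIMatrix N a b *ᵥ u)) + c‖
      ≤ 2 * (‖a‖ + ‖b‖) := by
  set s := star u ⬝ᵥ (PIMatrix N 1 0 *ᵥ u)
  have hform : star u ⬝ᵥ (PIMatrix N a b *ᵥ u) = a * s + b * conj s := by
    rw [PIMatrix_eq_smul_add_smul_conjTranspose, add_mulVec, smul_mulVec, smul_mulVec,
      dotProduct_add, dotProduct_smul, dotProduct_smul, star_dotProduct_conjTranspose_mulVec]
    rfl
  have hs : ‖s‖ ≤ 1 := by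
    simpa [hu] using norm_star_dotProduct_mulVec_le _ u (sum_norm_PIMatrix_one_zero_row_le N)
      (sum_norm_PIMatrix_one_zero_col_le N)
  rw [hform]
  exact norm_sub_add_norm_add_le_of_norm_le_one hc hs

/-- The numerical range of `P_I` is contained in the convex hull of the ellipse
`E₁ = {a e^{iξ} + b e^{-iξ}}`, i.e. in the filled ellipse
`{z : |z − c| + |z + c| ≤ 2(|a| + |b|)}` where `c² = 4ab`. -/
theorem numerical_range_PI_subset_filled_ellipse
    (N : ℕ) (hN : 1 ≤ N) (a b : ℂ) (ha : a ≠ 0) (hb : b ≠ 0)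
    (hba : ‖b‖ ≤ ‖a‖)
    (c : ℂ) (hc : c ^ 2 = 4 * a * b)
    (u : Fin N → ℂ) (hu : ∑ i, ‖u i‖ ^ 2 = 1) :
    ‖(star u ⬝ᵥ (PIMatrix N a b *ᵥ u)) - c‖
      + ‖(star u ⬝ᵥ (PIMatrix N a b *ᵥ u)) + c‖
      ≤ 2 * (‖a‖ + ‖b‖) :=
  numerical_range_PI_subset_filled_ellipse_general N a b c hc u hu
end
end

section
/- Let N ≥ 1, let a, b ∈ ℂ \ {0}, and let P_I be the N×N bidiagonal Toeplitz matrix. Fix s ∈ ℂ with s² = ab. Then the spectrum of P_I consists exactly of the N values z(ν) = 2 s cos(π ν /(N+1)) for ν = 1, …, N; these N values are pairwise distinct and each is a simple eigenvalue (a simple root of the characteristic polynomial of P_I). -/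
noncomputable section

/-! Put `t = s / a`, so that `a t = s` and `s t = b`. For `θ = πν/(N+1)` the vector
`v_j = t^j sin(jθ)` (`j = 1, …, N`) satisfies `a v_{j+1} + b v_{j-1} = 2 s cos θ · v_j`, by
`sin((j+1)θ) + sin((j-1)θ) = 2 sin(jθ) cos θ`; the boundary rows hold because `sin(0 θ)` and
`sin((N+1)θ)` vanish. So every `2 s cos(πν/(N+1))` is an eigenvalue. These `N` values are
distinct since `s ≠ 0` and `cos` is injective on `[0, π]`, and the characteristic polynomial has
degree `N`, so they are all of its roots, each simple. -/

open Matrix Polynomial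

theorem Polynomial.roots_eq_map_of_injOn {R ι : Type*} [CommRing R] [IsDomain R] {p : R[X]}
    (hp : p ≠ 0) {s : Finset ι} {f : ι → R} (hdeg : p.natDegree ≤ s.card)
    (hf : Set.InjOn f s) (hroot : ∀ i ∈ s, p.IsRoot (f i)) :
    p.roots = s.val.map f := by
  classical
  rw [← Finset.image_val_of_injOn hf]
  refine (Multiset.eq_of_le_of_card_le ?_ ?_).symm
  · rw [Multiset.le_iff_subset (Finset.nodup _)]
    intro x hx
    obtain ⟨i, hi, rfl⟩ := Finset.mem_image.mp hx
    exact (mem_roots hp).mpr (hroot i hi)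
  · rw [Finset.card_val, Finset.card_image_of_injOn hf]
    exact (card_roots' p).trans hdeg

theorem Matrix.isRoot_charpoly_of_mulVec_eq_smul {n R : Type*} [Fintype n] [DecidableEq n]
    [CommRing R] [IsDomain R] {M : Matrix n n R} {v : n → R} {z : R} (hv : v ≠ 0)
    (h : M *ᵥ v = z • v) : M.charpoly.IsRoot z := by
  rw [Polynomial.IsRoot, eval_charpoly, ← exists_mulVec_eq_zero_iff]
  exact ⟨v, hv, by simp [sub_mulVec, h]⟩

theorem PIMatrix_mulVec_apply {N : ℕ} (a b : ℂ) {W : ℕ → ℂ} (h0 : W 0 = 0)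
    (hN : W (N + 1) = 0) (i : Fin N) :
    (PIMatrix N a b *ᵥ fun k => W (k + 1)) i = a * W (i + 2) + b * W i := by
  set g : ℕ → ℂ := fun m => (if m = i + 2 then a * W m else 0) + (if m = i then b * W m else 0)
  have hrow : (PIMatrix N a b *ᵥ fun k => W (k + 1)) i = ∑ k ∈ Finset.range N, g (k + 1) := by
    rw [Matrix.mulVec, dotProduct, ← Fin.sum_univ_eq_sum_range]
    refine Finset.sum_congr rfl fun k _ => ?_
    simp only [PIMatrix, g]
    split_ifs <;> first | omega | ring
  have hg0 : g 0 = 0 := by simp [g, h0]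
  have hgN : g (N + 1) = 0 := by simp [g, hN]
  have hsum : ∑ m ∈ Finset.range (N + 2), g m = a * W (i + 2) + b * W i := by
    have := i.isLt
    simp [g, Finset.sum_add_distrib, Finset.sum_ite_eq', show i + 2 < N + 2 by omega,
      show (i : ℕ) < N + 2 by omega]
  rw [hrow, ← hsum, Finset.sum_range_succ', Finset.sum_range_succ, hg0, hgN, add_zero, add_zero]

theorem PIMatrix_mulVec_eq_smul {N : ℕ} {a b z : ℂ} {W : ℕ → ℂ} (h0 : W 0 = 0)
    (hN : W (N + 1) = 0) (hrec : ∀ j, a * W (j + 2) + b * W j = z * W (j + 1)) :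
    (PIMatrix N a b *ᵥ fun k : Fin N => W (k + 1)) = z • fun k : Fin N => W (k + 1) := by
  ext i
  rw [PIMatrix_mulVec_apply a b h0 hN, hrec, Pi.smul_apply, smul_eq_mul]

theorem pow_mul_sin_nat_mul_recurrence {a b s t : ℂ} (hat : a * t = s) (hst : s * t = b)
    (θ : ℂ) (j : ℕ) :
    a * (t ^ (j + 2) * Complex.sin ((j + 2 : ℕ) * θ)) + b * (t ^ j * Complex.sin (j * θ))
      = 2 * s * Complex.cos θ * (t ^ (j + 1) * Complex.sin ((j + 1 : ℕ) * θ)) := by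
  have hsin : Complex.sin ((j + 2 : ℕ) * θ) + Complex.sin (j * θ)
      = 2 * Complex.sin ((j + 1 : ℕ) * θ) * Complex.cos θ := by
    rw [Complex.sin_add_sin]
    push_cast
    ring_nf
  rw [← hst, ← hat]
  linear_combination a * t ^ (j + 2) * hsin

theorem isRoot_charpoly_PIMatrix_of_sin {N : ℕ} (hN : 0 < N) {a b s t θ : ℂ} (ht : t ≠ 0)
    (hat : a * t = s) (hst : s * t = b) (hθ : Complex.sin θ ≠ 0)
    (hθN : Complex.sin ((N + 1) * θ) = 0) :
    (PIMatrix N a b).charpoly.IsRoot (2 * s * Complex.cos θ) := by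
  set W : ℕ → ℂ := fun j => t ^ j * Complex.sin (j * θ)
  refine isRoot_charpoly_of_mulVec_eq_smul (v := fun k : Fin N => W (k + 1)) (fun h => ?_)
    (PIMatrix_mulVec_eq_smul (by simp [W]) (by simp [W, hθN])
      (pow_mul_sin_nat_mul_recurrence hat hst θ))
  have hW1 : W 1 = 0 := congrFun h ⟨0, hN⟩
  simp only [W, pow_one, Nat.cast_one, one_mul] at hW1
  exact mul_ne_zero ht hθ hW1

theorem isRoot_charpoly_PIMatrix {N ν : ℕ} (hν : ν ∈ Finset.Icc 1 N) {a b s t : ℂ}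
    (ht : t ≠ 0) (hat : a * t = s) (hst : s * t = b) :
    (PIMatrix N a b).charpoly.IsRoot (2 * s * Complex.cos ((Real.pi * ν / (N + 1) : ℝ) : ℂ)) := by
  obtain ⟨hν1, hνN⟩ := Finset.mem_Icc.mp hν
  have hθ : 0 < Real.pi * ν / (N + 1) ∧ Real.pi * ν / (N + 1) < Real.pi := by
    refine ⟨by positivity, (div_lt_iff₀ (by positivity)).mpr ?_⟩
    have : (ν : ℝ) < N + 1 := by exact_mod_cast Nat.lt_succ_of_le hνN
    nlinarith [Real.pi_pos]
  refine isRoot_charpoly_PIMatrix_of_sin (by omega) ht hat hst ?_ ?_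
  · rw [← Complex.ofReal_sin, Complex.ofReal_ne_zero]
    exact (Real.sin_pos_of_pos_of_lt_pi hθ.1 hθ.2).ne'
  · have hθN : ((N : ℂ) + 1) * ((Real.pi * ν / (N + 1) : ℝ) : ℂ) = ν * Real.pi := by
      push_cast
      field_simp
    rw [hθN, Complex.sin_nat_mul_pi]

theorem injOn_cos_pi_mul_div (N : ℕ) :
    Set.InjOn (fun ν : ℕ => Real.cos (Real.pi * ν / (N + 1))) (Set.Icc 0 (N + 1)) := by
  have hangle : Set.MapsTo (fun ν : ℕ => Real.pi * ν / (N + 1)) (Set.Icc 0 (N + 1))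
      (Set.Icc 0 Real.pi) := by
    intro ν hν
    refine ⟨by positivity, (div_le_iff₀ (by positivity)).mpr ?_⟩
    have : (ν : ℝ) ≤ N + 1 := by exact_mod_cast hν.2
    nlinarith [Real.pi_pos]
  refine Real.injOn_cos.comp (fun ν _ μ _ h => ?_) hangle
  field_simp at h
  exact_mod_cast h

theorem injOn_two_mul_cos_pi_mul_div {s : ℂ} (hs : s ≠ 0) (N : ℕ) :
    Set.InjOn (fun ν : ℕ => 2 * s * Complex.cos ((Real.pi * ν / (N + 1) : ℝ) : ℂ))
      (Set.Icc 0 (N + 1)) := by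
  intro ν hν μ hμ h
  apply injOn_cos_pi_mul_div N hν hμ
  have := mul_left_cancel₀ (mul_ne_zero two_ne_zero hs) h
  simpa only [← Complex.ofReal_cos, Complex.ofReal_inj] using this

theorem spectrum_PI_general (N : ℕ) (a b : ℂ) (ha : a ≠ 0) (hb : b ≠ 0)
    (s : ℂ) (hs : s ^ 2 = a * b) :
    (Matrix.charpoly (PIMatrix N a b)).roots
        = (Finset.Icc 1 N).val.map
            (fun ν : ℕ => 2 * s * Complex.cos ((Real.pi * ν / (N + 1) : ℝ) : ℂ))
      ∧ ∀ ν ∈ Finset.Icc 1 N, ∀ μ ∈ Finset.Icc 1 N,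
          2 * s * Complex.cos ((Real.pi * ν / (N + 1) : ℝ) : ℂ)
            = 2 * s * Complex.cos ((Real.pi * μ / (N + 1) : ℝ) : ℂ) → ν = μ := by
  have hs0 : s ≠ 0 := by
    rintro rfl
    exact mul_ne_zero ha hb (by simpa using hs.symm)
  have hinj : Set.InjOn (fun ν : ℕ => 2 * s * Complex.cos ((Real.pi * ν / (N + 1) : ℝ) : ℂ))
      (Finset.Icc 1 N) := (injOn_two_mul_cos_pi_mul_div hs0 N).mono fun ν hν =>
    Set.mem_Icc.mpr ⟨Nat.zero_le ν, (Finset.mem_Icc.mp hν).2.trans N.le_succ⟩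
  refine ⟨roots_eq_map_of_injOn (charpoly_monic _).ne_zero (by simp) hinj fun ν hν => ?_,
    fun ν hν μ hμ h => hinj hν hμ h⟩
  refine isRoot_charpoly_PIMatrix hν (t := s / a) (div_ne_zero hs0 ha) (mul_div_cancel₀ s ha) ?_
  field_simp
  linear_combination hs

/-- The spectrum of `P_I` consists exactly of the `N` pairwise distinct simple
eigenvalues `z(ν) = 2 s cos(π ν/(N+1))`, `ν = 1,…,N`, where `s² = ab`:
the multiset of roots of the characteristic polynomial equals the image of
`{1,…,N}` under `ν ↦ z(ν)`, and `ν ↦ z(ν)` is injective on `{1,…,N}`. -/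
theorem spectrum_PI (N : ℕ) (hN : 1 ≤ N) (a b : ℂ) (ha : a ≠ 0) (hb : b ≠ 0)
    (s : ℂ) (hs : s ^ 2 = a * b) :
    (Matrix.charpoly (PIMatrix N a b)).roots
        = (Finset.Icc 1 N).val.map
            (fun ν : ℕ => 2 * s * Complex.cos ((Real.pi * ν / (N + 1) : ℝ) : ℂ))
      ∧ ∀ ν ∈ Finset.Icc 1 N, ∀ μ ∈ Finset.Icc 1 N,
          2 * s * Complex.cos ((Real.pi * ν / (N + 1) : ℝ) : ℂ)
            = 2 * s * Complex.cos ((Real.pi * μ / (N + 1) : ℝ) : ℂ) → ν = μ :=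
  spectrum_PI_general N a b ha hb s hs
end
end

section
/- Let N ≥ 1, let a, b ∈ ℂ \ {0}, let P_I be the N×N bidiagonal Toeplitz matrix, and let z ∈ ℂ be such that the two roots ζ_+, ζ_- of a ζ² − z ζ + b = 0 are distinct. Then det(P_I − z·I_N) = (−a)^N (ζ_+^{N+1} − ζ_-^{N+1})/(ζ_+ − ζ_-). -/
noncomputable section

def Mz (N : ℕ) (a b z : ℂ) : Matrix (Fin N) (Fin N) ℂ :=
  PIMatrix N a b - z • (1 : Matrix (Fin N) (Fin N) ℂ)

lemma Mz_entry (N : ℕ) (a b z : ℂ) (i j : Fin N) :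
    Mz N a b z i j =
      if (i : ℕ) + 1 = (j : ℕ) then a else if (j : ℕ) + 1 = (i : ℕ) then b
      else if (i : ℕ) = (j : ℕ) then -z else 0 := by
  simp only [Mz, Matrix.sub_apply, Matrix.smul_apply, Matrix.one_apply, PIMatrix,
    smul_eq_mul, Fin.ext_iff]
  split_ifs <;> simp_all <;> omega

lemma Mz_shift (n : ℕ) (a b z : ℂ) :
    (Mz (n+1) a b z).submatrix Fin.succ Fin.succ = Mz n a b z := by
  ext i j
  simp only [Matrix.submatrix_apply, Mz_entry, Fin.val_succ]
  split_ifs <;> simp_all <;> omega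


lemma val_succAbove {n : ℕ} (p : Fin (n+1)) (i : Fin n) :
    ((p.succAbove i) : ℕ) = if (i:ℕ) < (p:ℕ) then (i:ℕ) else (i:ℕ)+1 := by
  rw [Fin.succAbove]
  split_ifs with h h' <;> simp_all [Fin.lt_def]

lemma Mz_shift2 (n : ℕ) (a b z : ℂ) :
    (((Mz (n+1+1) a b z).submatrix Fin.succ (Fin.succ (0:Fin (n+1))).succAbove).submatrix
      Fin.succ Fin.succ) = Mz n a b z := by
  ext i j
  simp only [Matrix.submatrix_apply, Mz_entry, Fin.val_succ, val_succAbove]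
  split_ifs <;> simp_all <;> omega

def dseq (z w : ℂ) : ℕ → ℂ
  | 0 => 1
  | 1 => -z
  | (n+2) => -z * dseq z w (n+1) - w * dseq z w n

lemma det_Mz (a b z : ℂ) : ∀ n, (Mz n a b z).det = dseq z (a*b) n := by
  intro n
  induction n using Nat.twoStepInduction with
  | zero => simp [dseq, Matrix.det_fin_zero]
  | one =>
    rw [show (1:ℕ) = 0+1 from rfl, Matrix.det_fin_one]
    simp [dseq, Mz_entry]
  | more n ih ih1 =>
    rw [show n+2 = (n+1)+1 from rfl, Matrix.det_succ_row_zero]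
    rw [Fin.sum_univ_succ, Fin.sum_univ_succ]
    have h0 : Mz (n+1+1) a b z 0 0 = -z := by simp [Mz_entry]
    have h1 : Mz (n+1+1) a b z 0 (Fin.succ 0) = a := by simp [Mz_entry]
    have hrest : ∀ j : Fin n, Mz (n+1+1) a b z 0 (Fin.succ (Fin.succ j)) = 0 := by
      intro j; simp [Mz_entry]
    rw [Finset.sum_eq_zero (fun j _ => by rw [hrest j]; ring)]
    rw [h0, h1, Fin.succAbove_zero, Mz_shift, ih1]
    have hP : ((Mz (n+1+1) a b z).submatrix Fin.succ (Fin.succ (0:Fin (n+1))).succAbove).det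
        = b * dseq z (a*b) n := by
      rw [Matrix.det_succ_column_zero, Fin.sum_univ_succ]
      have e0 : ((Mz (n+1+1) a b z).submatrix Fin.succ (Fin.succ (0:Fin (n+1))).succAbove) 0 0
          = b := by
        simp [Matrix.submatrix_apply, Mz_entry, val_succAbove]
      have erest : ∀ i : Fin n,
          ((Mz (n+1+1) a b z).submatrix Fin.succ (Fin.succ (0:Fin (n+1))).succAbove)
            (Fin.succ i) 0 = 0 := by
        intro i
        simp [Matrix.submatrix_apply, Mz_entry, val_succAbove]
      rw [Finset.sum_eq_zero (fun i _ => by rw [erest i]; ring), e0, Fin.succAbove_zero,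
        Mz_shift2, ih]
      norm_num
    rw [hP]
    show _ = dseq z (a*b) (n+2)
    rw [dseq]
    norm_num
    ring

lemma dseq_formula (a b z ζp ζm : ℂ) (ha : a ≠ 0)
    (hp : a * ζp ^ 2 - z * ζp + b = 0) (hm : a * ζm ^ 2 - z * ζm + b = 0)
    (hne : ζp ≠ ζm) :
    ∀ n, dseq z (a*b) n = (-a) ^ n * (ζp ^ (n + 1) - ζm ^ (n + 1)) / (ζp - ζm) := by
  have hd : ζp - ζm ≠ 0 := sub_ne_zero.mpr hne
  have h1 : (ζp - ζm) * (a*(ζp+ζm) - z) = 0 := by linear_combination hp - hm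
  have hz : z = a*(ζp+ζm) := by
    rcases mul_eq_zero.mp h1 with h | h
    · exact absurd h hd
    · exact (sub_eq_zero.mp h).symm
  have hbv : b = a*(ζp*ζm) := by linear_combination hp + ζp * hz
  intro n
  induction n using Nat.twoStepInduction with
  | zero => simp [dseq, div_self hd]
  | one =>
    rw [dseq, hz]
    field_simp
    ring
  | more n ih ih1 =>
    rw [dseq, ih, ih1, hz, hbv]
    field_simp
    ring

/-- If `ζ₊, ζ₋` are the two distinct roots of `a ζ² − z ζ + b = 0`, then
`det(P_I − z) = (−a)^N (ζ₊^{N+1} − ζ₋^{N+1})/(ζ₊ − ζ₋)`. -/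
theorem det_PI_sub_z (N : ℕ) (hN : 1 ≤ N) (a b : ℂ) (ha : a ≠ 0) (hb : b ≠ 0)
    (z ζp ζm : ℂ)
    (hp : a * ζp ^ 2 - z * ζp + b = 0) (hm : a * ζm ^ 2 - z * ζm + b = 0)
    (hne : ζp ≠ ζm) :
    (PIMatrix N a b - z • (1 : Matrix (Fin N) (Fin N) ℂ)).det
      = (-a) ^ N * (ζp ^ (N + 1) - ζm ^ (N + 1)) / (ζp - ζm) := by
  rw [show (PIMatrix N a b - z • (1 : Matrix (Fin N) (Fin N) ℂ)) = Mz N a b z from rfl,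
    det_Mz, dseq_formula a b z ζp ζm ha hp hm hne]
end
end

section
/- Let a, b ∈ ℂ \ {0} and let c ∈ ℂ satisfy c² = 4ab. Then the image of the symbol, {a e^{iξ} + b e^{-iξ} : ξ ∈ ℝ}, equals the set {z ∈ ℂ : |z − c| + |z + c| = 2(|a| + |b|)}; i.e. it is the ellipse with focal points ±c, major semi-axis of length |a| + |b| (pointing in the direction e^{i(α+β)/2} where a = |a| e^{iα}, b = |b| e^{iβ}), and minor semi-axis of length ||a| − |b||. -/
/-!
If `u * v = a * b` and `c ^ 2 = 4 * a * b`, then `(u + v) ^ 2 - c ^ 2 = (u - v) ^ 2`, so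
`‖u + v - c‖ * ‖u + v + c‖ = ‖u - v‖ ^ 2`; together with two parallelogram laws this gives
`‖u + v - c‖ + ‖u + v + c‖ = 2 * (‖u‖ + ‖v‖)`. Taking `u = a e^{iξ}`, `v = b e^{-iξ}` puts the
symbol on the ellipse. Conversely, a point `z` of the ellipse splits as `z = u + v` with
`u * v = a * b` (roots of `X² - zX + ab`); the identity forces `‖u‖ + ‖v‖ = ‖a‖ + ‖b‖` and
`‖u‖ ‖v‖ = ‖a‖ ‖b‖`, so after relabelling `‖u‖ = ‖a‖`, and `u / a = e^{iξ}` gives `v = b e^{-iξ}`.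
-/

open Complex

theorem eq_and_eq_or_eq_and_eq_of_add_eq_add_of_mul_eq_mul {R : Type*} [CommRing R]
    [NoZeroDivisors R] {s t m n : R} (h₁ : s + t = m + n) (h₂ : s * t = m * n) :
    s = m ∧ t = n ∨ s = n ∧ t = m := by
  have h : (s - m) * (s - n) = 0 := by linear_combination s * h₁ - h₂
  rcases mul_eq_zero.1 h with h | h
  · exact .inl ⟨sub_eq_zero.1 h, by linear_combination h₁ - h⟩
  · exact .inr ⟨sub_eq_zero.1 h, by linear_combination h₁ - h⟩

open Polynomial in
theorem exists_add_eq_and_mul_eq {K : Type*} [Field K] [IsAlgClosed K] (z p : K) :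
    ∃ u v : K, u + v = z ∧ u * v = p := by
  obtain ⟨u, hu⟩ := IsAlgClosed.exists_root (X ^ 2 - C z * X + C p) (by
    rw [show (X ^ 2 - C z * X + C p : K[X]).degree = 2 by compute_degree!]; decide)
  refine ⟨u, z - u, add_sub_cancel u z, ?_⟩
  simp only [IsRoot, eval_add, eval_sub, eval_pow, eval_mul, eval_C, eval_X] at hu
  linear_combination -hu

theorem norm_sub_add_norm_add_eq_of_sq_eq_four_mul {u v c : ℂ} (h : c ^ 2 = 4 * u * v) :
    ‖u + v - c‖ + ‖u + v + c‖ = 2 * (‖u‖ + ‖v‖) := by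
  have hprod : ‖u + v - c‖ * ‖u + v + c‖ = ‖u - v‖ ^ 2 := by
    rw [← norm_mul, ← norm_pow]
    congr 1
    linear_combination -h
  have hc : ‖c‖ ^ 2 = 4 * (‖u‖ * ‖v‖) := by
    rw [← norm_pow, h, norm_mul, norm_mul]
    norm_num
    ring
  have hsq : (‖u + v - c‖ + ‖u + v + c‖) ^ 2 = (2 * (‖u‖ + ‖v‖)) ^ 2 := by
    have h₁ := parallelogram_law_with_norm ℝ (u + v) c
    have h₂ := parallelogram_law_with_norm ℝ u v
    linear_combination h₁ + 2 * hprod + 2 * h₂ + 2 * hc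
  exact (sq_eq_sq₀ (by positivity) (by positivity)).1 hsq

theorem exists_mul_exp_eq_of_mul_eq {a b u v : ℂ} (ha : a ≠ 0) (huv : u * v = a * b)
    (hu : ‖u‖ = ‖a‖) : ∃ ξ : ℝ, a * exp (ξ * I) = u ∧ b * exp (-(ξ * I)) = v := by
  have hu0 : u ≠ 0 := norm_ne_zero_iff.1 (hu ▸ norm_ne_zero_iff.2 ha)
  have hunit : ‖u / a‖ = 1 := by rw [norm_div, hu, div_self (norm_ne_zero_iff.2 ha)]
  have hexp : exp ((u / a).arg * I) = u / a := by
    have h := norm_mul_exp_arg_mul_I (u / a)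
    rwa [hunit, ofReal_one, one_mul] at h
  refine ⟨(u / a).arg, ?_, ?_⟩
  · rw [hexp, mul_div_cancel₀ _ ha]
  · rw [exp_neg, hexp]
    field_simp
    linear_combination -huv

theorem range_symbol_eq_ellipse_general (a b : ℂ) (ha : a ≠ 0)
    (c : ℂ) (hc : c ^ 2 = 4 * a * b) :
    Set.range (fun ξ : ℝ => a * Complex.exp (ξ * Complex.I)
        + b * Complex.exp (-(ξ * Complex.I)))
      = {z : ℂ | ‖z - c‖ + ‖z + c‖
          = 2 * (‖a‖ + ‖b‖)} := by
  ext z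
  constructor
  · rintro ⟨ξ, rfl⟩
    have hprod : a * exp (ξ * I) * (b * exp (-(ξ * I))) = a * b := by
      rw [mul_mul_mul_comm, ← exp_add, add_neg_cancel, exp_zero, mul_one]
    have h := norm_sub_add_norm_add_eq_of_sq_eq_four_mul (u := a * exp (ξ * I))
      (v := b * exp (-(ξ * I))) (c := c) (by linear_combination hc - 4 * hprod)
    simpa [norm_exp] using h
  · intro hz
    obtain ⟨u, v, rfl, huv⟩ := exists_add_eq_and_mul_eq z (a * b)
    have hsum : ‖u‖ + ‖v‖ = ‖a‖ + ‖b‖ := by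
      have h := norm_sub_add_norm_add_eq_of_sq_eq_four_mul (u := u) (v := v) (c := c)
        (by linear_combination hc - 4 * huv)
      linarith [hz.symm.trans h]
    have hprod : ‖u‖ * ‖v‖ = ‖a‖ * ‖b‖ := by rw [← norm_mul, huv, norm_mul]
    rcases eq_and_eq_or_eq_and_eq_of_add_eq_add_of_mul_eq_mul hsum hprod with
      ⟨hu, -⟩ | ⟨-, hv⟩
    · obtain ⟨ξ, hξu, hξv⟩ := exists_mul_exp_eq_of_mul_eq ha huv hu
      exact ⟨ξ, by simp only [hξu, hξv]⟩
    · obtain ⟨ξ, hξv, hξu⟩ := exists_mul_exp_eq_of_mul_eq ha (mul_comm u v ▸ huv) hv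
      exact ⟨ξ, by simp only [hξu, hξv, add_comm]⟩

/-- The range of the symbol `ξ ↦ a e^{iξ} + b e^{-iξ}` is the ellipse with focal
points `±c` (where `c² = 4ab`) and major semi-axis `|a| + |b|`, i.e. the set
`{z : |z − c| + |z + c| = 2(|a| + |b|)}`. -/
theorem range_symbol_eq_ellipse (a b : ℂ) (ha : a ≠ 0) (hb : b ≠ 0)
    (c : ℂ) (hc : c ^ 2 = 4 * a * b) :
    Set.range (fun ξ : ℝ => a * Complex.exp (ξ * Complex.I)
        + b * Complex.exp (-(ξ * Complex.I)))
      = {z : ℂ | ‖z - c‖ + ‖z + c‖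
          = 2 * (‖a‖ + ‖b‖)} :=
  range_symbol_eq_ellipse_general a b ha c hc
end

section
/- Let a, b ∈ ℂ with 0 < |b| < |a|, let c ∈ ℂ satisfy c² = 4ab, and let z ∈ ℂ. Let ζ_+, ζ_- be the two roots (with multiplicity) of a ζ² − z ζ + b = 0. Then: (i) if |z − c| + |z + c| < 2(|a| + |b|) (z strictly inside the ellipse E₁), then |ζ_+| < 1 and |ζ_-| < 1; (ii) if |z − c| + |z + c| = 2(|a| + |b|) (z on E₁), then one root has modulus exactly 1 and the other has modulus < 1; (iii) if |z − c| + |z + c| > 2(|a| + |b|) (z in the exterior region), then one root has modulus > 1 and the other has modulus < 1. -/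
/-! Comparing coefficients gives `z = a (ζ₊ + ζ₋)` and `b = a ζ₊ ζ₋`, and `c = 2 a w` with `w² = ζ₊ ζ₋`.
Writing `ζ₊ = s²`, `ζ₋ = t²` with `w = s t`, we get `z ∓ c = a (s ∓ t)²`, so by the parallelogram law
`|z − c| + |z + c| = 2 |a| (|ζ₊| + |ζ₋|)`. Hence
`2 (|a| + |b|) − (|z − c| + |z + c|) = 2 |a| (1 − |ζ₊|) (1 − |ζ₋|)`, and the position of `z` relative
to `E₁` is the sign of `(1 − |ζ₊|) (1 − |ζ₋|)`; the constraint `|ζ₊| |ζ₋| = |b| / |a| < 1` rules out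
both roots lying outside the closed unit disc. -/

theorem Complex.norm_sub_two_mul_add_norm_add_two_mul {p q w : ℂ} (hw : w ^ 2 = p * q) :
    ‖p + q - 2 * w‖ + ‖p + q + 2 * w‖ = 2 * (‖p‖ + ‖q‖) := by
  obtain ⟨s, rfl⟩ := IsAlgClosed.exists_eq_mul_self p
  obtain ⟨t₀, rfl⟩ := IsAlgClosed.exists_eq_mul_self q
  obtain ⟨t, hq, rfl⟩ : ∃ t, t₀ * t₀ = t * t ∧ w = s * t := by
    rcases sq_eq_sq_iff_eq_or_eq_neg.1 (show w ^ 2 = (s * t₀) ^ 2 by rw [hw]; ring) with h | h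
    · exact ⟨t₀, rfl, h⟩
    · exact ⟨-t₀, by ring, by rw [h]; ring⟩
  rw [hq]
  calc ‖s * s + t * t - 2 * (s * t)‖ + ‖s * s + t * t + 2 * (s * t)‖
      = ‖s + t‖ ^ 2 + ‖s - t‖ ^ 2 := by
        rw [← norm_pow, ← norm_pow, add_comm]; ring_nf
    _ = 2 * (‖s * s‖ + ‖t * t‖) := by
        rw [parallelogram_law_with_norm ℝ, norm_mul, norm_mul]; ring

theorem Real.one_sub_mul_one_sub_sign_cases {x y : ℝ} (hxy : x * y < 1) :
    (0 < (1 - x) * (1 - y) → x < 1 ∧ y < 1) ∧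
    ((1 - x) * (1 - y) = 0 → (x = 1 ∧ y < 1) ∨ (y = 1 ∧ x < 1)) ∧
    ((1 - x) * (1 - y) < 0 → (1 < x ∧ y < 1) ∨ (1 < y ∧ x < 1)) := by
  refine ⟨fun h => ?_, fun h => ?_, fun h => ?_⟩
  · rcases mul_pos_iff.1 h with ⟨hx, hy⟩ | ⟨hx, hy⟩
    · exact ⟨by linarith, by linarith⟩
    · nlinarith
  · rcases mul_eq_zero.1 h with hx | hy
    · obtain rfl : x = 1 := by linarith
      exact Or.inl ⟨rfl, by linarith⟩
    · obtain rfl : y = 1 := by linarith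
      exact Or.inr ⟨rfl, by linarith⟩
  · rcases mul_neg_iff.1 h with ⟨hx, hy⟩ | ⟨hx, hy⟩
    · exact Or.inr ⟨by linarith, by linarith⟩
    · exact Or.inl ⟨by linarith, by linarith⟩

theorem roots_location_inside_on_outside_general (a b : ℂ)
    (hba : ‖b‖ < ‖a‖)
    (c : ℂ) (hc : c ^ 2 = 4 * a * b) (z ζp ζm : ℂ)
    (hfact : ∀ ζ : ℂ, a * ζ ^ 2 - z * ζ + b = a * (ζ - ζp) * (ζ - ζm)) :
    (‖z - c‖ + ‖z + c‖ < 2 * (‖a‖ + ‖b‖) →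
        ‖ζp‖ < 1 ∧ ‖ζm‖ < 1) ∧
    (‖z - c‖ + ‖z + c‖ = 2 * (‖a‖ + ‖b‖) →
        (‖ζp‖ = 1 ∧ ‖ζm‖ < 1) ∨
        (‖ζm‖ = 1 ∧ ‖ζp‖ < 1)) ∧
    (2 * (‖a‖ + ‖b‖) < ‖z - c‖ + ‖z + c‖ →
        (1 < ‖ζp‖ ∧ ‖ζm‖ < 1) ∨
        (1 < ‖ζm‖ ∧ ‖ζp‖ < 1)) := by
  have ha : 0 < ‖a‖ := (norm_nonneg b).trans_lt hba
  have ha₀ : a ≠ 0 := norm_pos_iff.1 ha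
  have hb : b = a * (ζp * ζm) := by linear_combination hfact 0
  have hz : z = a * (ζp + ζm) := by linear_combination hfact 0 - hfact 1
  obtain ⟨w, hcw⟩ : ∃ w, c = a * (2 * w) := ⟨c / (2 * a), by field_simp⟩
  have hw : w ^ 2 = ζp * ζm := by
    have h : (a * (2 * w)) ^ 2 = 4 * a * (a * (ζp * ζm)) := hcw ▸ hb ▸ hc
    apply mul_left_cancel₀ (mul_ne_zero (by norm_num) (pow_ne_zero 2 ha₀) : (4 * a ^ 2 : ℂ) ≠ 0)
    linear_combination h
  have hgap : 2 * (‖a‖ + ‖b‖) - (‖z - c‖ + ‖z + c‖) = 2 * ‖a‖ * ((1 - ‖ζp‖) * (1 - ‖ζm‖)) := by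
    rw [hz, hcw, hb, ← mul_sub, ← mul_add]
    simp only [norm_mul]
    rw [← mul_add, Complex.norm_sub_two_mul_add_norm_add_two_mul hw]
    ring
  have hprod : ‖ζp‖ * ‖ζm‖ < 1 := by
    rw [hb, norm_mul, norm_mul] at hba
    exact (mul_lt_iff_lt_one_right ha).1 hba
  obtain ⟨inside, on, outside⟩ := Real.one_sub_mul_one_sub_sign_cases hprod
  refine ⟨fun h => inside ?_, fun h => on ?_, fun h => outside ?_⟩
  · exact pos_of_mul_pos_right (hgap ▸ sub_pos.2 h) (by positivity)
  · exact (mul_eq_zero.1 (by rw [← hgap, h, sub_self])).resolve_left (by positivity)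
  · exact neg_of_mul_neg_right (hgap ▸ sub_neg.2 h) (by positivity)

/-- Location of the two roots `ζ₊, ζ₋` of `a ζ² − z ζ + b = 0` (encoded by the
factorization `a ζ² − z ζ + b = a (ζ − ζ₊)(ζ − ζ₋)`) relative to the unit
circle, according to the position of `z` relative to the ellipse
`E₁ = {w : |w − c| + |w + c| = 2(|a| + |b|)}`, `c² = 4ab`, when `0 < |b| < |a|`. -/
theorem roots_location_inside_on_outside (a b : ℂ)
    (hb : 0 < ‖b‖) (hba : ‖b‖ < ‖a‖)
    (c : ℂ) (hc : c ^ 2 = 4 * a * b) (z ζp ζm : ℂ)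
    (hfact : ∀ ζ : ℂ, a * ζ ^ 2 - z * ζ + b = a * (ζ - ζp) * (ζ - ζm)) :
    (‖z - c‖ + ‖z + c‖ < 2 * (‖a‖ + ‖b‖) →
        ‖ζp‖ < 1 ∧ ‖ζm‖ < 1) ∧
    (‖z - c‖ + ‖z + c‖ = 2 * (‖a‖ + ‖b‖) →
        (‖ζp‖ = 1 ∧ ‖ζm‖ < 1) ∨
        (‖ζm‖ = 1 ∧ ‖ζp‖ < 1)) ∧
    (2 * (‖a‖ + ‖b‖) < ‖z - c‖ + ‖z + c‖ →
        (1 < ‖ζp‖ ∧ ‖ζm‖ < 1) ∨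
        (1 < ‖ζm‖ ∧ ‖ζp‖ < 1)) :=
  roots_location_inside_on_outside_general a b hba c hc z ζp ζm hfact
end

section
/- Let a, b ∈ ℂ \ {0} with |b| ≤ |a|, let c ∈ ℂ satisfy c² = 4ab, and let K ⊂ ℂ be compact. Then there exists a constant C = C(a, b, K) > 0 such that for every z ∈ K, the two roots ζ_+, ζ_- of a ζ² − z ζ + b = 0 satisfy |ζ_+ − ζ_-| ≥ C⁻¹ (|z − c| + |z + c| − 2|c|)^{1/2}. -/
/-!
Writing `z = a (ζ₊ + ζ₋)` and `b = a ζ₊ ζ₋` (Vieta), the discriminant identity gives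
`|a|² |ζ₊ − ζ₋|² = |z² − c²| = |z − c| |z + c|`. With `r₁ = |z − c|`, `r₂ = |z + c|`, the
triangle inequality `|r₁ − r₂| ≤ 2|c|` alone implies `r₁ r₂ ≥ |c| (r₁ + r₂ − 2|c|)`, so the bound
holds with the constant `C = |a| / |c|^{1/2}`, independent of `K`.
-/

lemma mul_sub_sq_of_forall_eq {K : Type*} [Field K] [NeZero (2 : K)] {a b z p q : K}
    (h : ∀ ζ : K, a * ζ ^ 2 - z * ζ + b = a * (ζ - p) * (ζ - q)) :
    a ^ 2 * (p - q) ^ 2 = z ^ 2 - 4 * a * b := by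
  have hprod : b = a * p * q := by linear_combination h 0
  have hsum : z = a * (p + q) :=
    mul_left_cancel₀ two_ne_zero (by linear_combination h (-1) - h 1)
  linear_combination (-(z + a * (p + q))) * hsum + 4 * a * hprod

/-- With `u = r₁ - c`, `v = r₂ - c` this is `4 (u v + c²) = (u + v)² + (4 c² - (u - v)²) ≥ 0`. -/
lemma mul_add_sub_two_mul_le_mul_of_abs_sub_le {r₁ r₂ c : ℝ} (h : |r₁ - r₂| ≤ 2 * c) :
    c * (r₁ + r₂ - 2 * c) ≤ r₁ * r₂ := by
  have hsq : (r₁ - r₂) ^ 2 ≤ (2 * c) ^ 2 := sq_le_sq' (abs_le.mp h).1 (abs_le.mp h).2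
  nlinarith [sq_nonneg (r₁ + r₂ - 2 * c)]

lemma norm_mul_excess_le_norm_sub_mul_norm_add {E : Type*} [SeminormedAddCommGroup E]
    (z c : E) : ‖c‖ * (‖z - c‖ + ‖z + c‖ - 2 * ‖c‖) ≤ ‖z - c‖ * ‖z + c‖ := by
  refine mul_add_sub_two_mul_le_mul_of_abs_sub_le ?_
  calc |‖z - c‖ - ‖z + c‖| ≤ ‖(z - c) - (z + c)‖ := abs_norm_sub_norm_le _ _
    _ = ‖c + c‖ := by rw [show z - c - (z + c) = -(c + c) by abel, norm_neg]
    _ ≤ 2 * ‖c‖ := by linarith [norm_add_le c c]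

theorem roots_separation_lower_bound_general (a b : ℂ) (ha : a ≠ 0) (hb : b ≠ 0)
    (c : ℂ) (hc : c ^ 2 = 4 * a * b) (K : Set ℂ) :
    ∃ C > 0, ∀ z ∈ K, ∀ ζp ζm : ℂ,
      (∀ ζ : ℂ, a * ζ ^ 2 - z * ζ + b = a * (ζ - ζp) * (ζ - ζm)) →
      ‖ζp - ζm‖ ≥
        C⁻¹ * Real.sqrt (‖z - c‖ + ‖z + c‖
          - 2 * ‖c‖) := by
  have hc0 : c ≠ 0 := by
    rintro rfl
    simp [ha, hb] at hc
  refine ⟨‖a‖ / √‖c‖, by positivity, fun z _ ζp ζm hfac => ?_⟩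
  have hdisc : ‖z - c‖ * ‖z + c‖ = (‖a‖ * ‖ζp - ζm‖) ^ 2 := by
    rw [mul_pow, ← norm_pow, ← norm_pow, ← norm_mul, ← norm_mul, mul_sub_sq_of_forall_eq hfac,
      ← hc]
    ring_nf
  have hfocal := norm_mul_excess_le_norm_sub_mul_norm_add z c
  rw [ge_iff_le, inv_div, div_mul_eq_mul_div, div_le_iff₀ (norm_pos_iff.mpr ha),
    ← Real.sqrt_mul (norm_nonneg c), mul_comm ‖ζp - ζm‖]
  exact Real.sqrt_le_iff.mpr ⟨by positivity, hdisc ▸ hfocal⟩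

/-- For `z` in a compact set `K`, the two roots `ζ₊, ζ₋` of `a ζ² − z ζ + b = 0`
satisfy `|ζ₊ − ζ₋| ≥ C⁻¹ (|z − c| + |z + c| − 2|c|)^{1/2}`, where `±c`
(`c² = 4ab`) are the focal points. -/
theorem roots_separation_lower_bound (a b : ℂ) (ha : a ≠ 0) (hb : b ≠ 0)
    (hba : ‖b‖ ≤ ‖a‖)
    (c : ℂ) (hc : c ^ 2 = 4 * a * b) (K : Set ℂ) (hK : IsCompact K) :
    ∃ C > 0, ∀ z ∈ K, ∀ ζp ζm : ℂ,
      (∀ ζ : ℂ, a * ζ ^ 2 - z * ζ + b = a * (ζ - ζp) * (ζ - ζm)) →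
      ‖ζp - ζm‖ ≥
        C⁻¹ * Real.sqrt (‖z - c‖ + ‖z + c‖
          - 2 * ‖c‖) :=
  roots_separation_lower_bound_general a b ha hb c hc K
end

section
/- Let a, b ∈ ℂ \ {0} with 2|b| < |a|, and let f(ζ) = a ζ + b ζ². Then f restricted to the unit circle S¹ is injective, so γ := f(S¹) is a Jordan curve; let Γ denote the bounded connected component of ℂ \ γ. Then for z ∈ ℂ, the two roots (with multiplicity) of b ζ² + a ζ − z = 0 satisfy: (i) if z ∈ Γ, then exactly one root lies in the open unit disc D(0,1) and the other lies in ℂ \ closure(D(0,1)); (ii) if z ∈ γ, then one root lies on S¹ and the other lies in ℂ \ closure(D(0,1)); (iii) if z lies in the unbounded component ℂ \ closure(Γ ∪ γ), then both roots lie in ℂ \ closure(D(0,1)). -/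
/-! The roots of `f ζ = z` satisfy `b (ζ₊ + ζ₋) = -a`, so `‖ζ₊‖ ≤ 1` forces `‖ζ₋‖ > 2 - 1 = 1`;
this gives injectivity on `S¹` and case (ii). By the open mapping theorem the component of `f w`
with `‖w‖ < 1` stays inside `f (D(0,1))`, hence is bounded. Conversely, if both roots lie outside
the closed disc, moving them as `ζ₊ + t u`, `ζ₋ - t u` with `u ⟂ ζ₊ + ζ₋` keeps both outside the
disc, so their common image is an unbounded path from `z` avoiding `γ`. -/

open Complex Set Metric Bornology Filter Polynomial

theorem IsOpenMap.connectedComponentIn_compl_image_diff_subset {X Y : Type*}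
    [TopologicalSpace X] [TopologicalSpace Y] {F : X → Y} (hF : IsOpenMap F) {U L : Set X}
    (hU : IsOpen U) (hL : IsClosed (F '' L)) (hUL : U ⊆ L) {z : Y} (hz : z ∈ F '' U) :
    connectedComponentIn (F '' (L \ U))ᶜ z ⊆ F '' U := by
  intro y hy
  have hzK : z ∈ (F '' (L \ U))ᶜ := connectedComponentIn_nonempty_iff.1 ⟨y, hy⟩
  have hcover : connectedComponentIn (F '' (L \ U))ᶜ z ⊆ F '' U ∪ (F '' L)ᶜ := by
    intro w hw
    show w ∈ F '' U ∨ w ∈ (F '' L)ᶜ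
    by_cases hwL : w ∈ F '' L
    · obtain ⟨v, hvL, rfl⟩ := hwL
      by_cases hvU : v ∈ U
      · exact Or.inl (mem_image_of_mem F hvU)
      · exact absurd (mem_image_of_mem F (mem_sdiff_of_mem hvL hvU))
          (connectedComponentIn_subset _ _ hw)
    · exact Or.inr hwL
  exact isPreconnected_connectedComponentIn.subset_left_of_subset_union (hF U hU)
    hL.isOpen_compl (disjoint_compl_right.mono_left (image_mono hUL)) hcover
    ⟨z, mem_connectedComponentIn hzK, hz⟩ hy

theorem norm_sq_add_sq_le_norm_add_smul_sq {E : Type*} [NormedAddCommGroup E]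
    [InnerProductSpace ℝ E] {v u : E} (h : 0 ≤ inner ℝ v u) {t : ℝ} (ht : 0 ≤ t) :
    ‖v‖ ^ 2 + (t * ‖u‖) ^ 2 ≤ ‖v + t • u‖ ^ 2 := by
  rw [norm_add_sq_real, real_inner_smul_right, norm_smul, Real.norm_of_nonneg ht]
  nlinarith [mul_nonneg ht h]

theorem norm_le_norm_add_smul_of_inner_nonneg {E : Type*} [NormedAddCommGroup E]
    [InnerProductSpace ℝ E] {v u : E} (h : 0 ≤ inner ℝ v u) {t : ℝ} (ht : 0 ≤ t) :
    ‖v‖ ≤ ‖v + t • u‖ :=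
  pow_le_pow_iff_left₀ (norm_nonneg _) (norm_nonneg _) two_ne_zero |>.1 <| by
    nlinarith [norm_sq_add_sq_le_norm_add_smul_sq h ht]

theorem mul_norm_le_norm_add_smul_of_inner_nonneg {E : Type*} [NormedAddCommGroup E]
    [InnerProductSpace ℝ E] {v u : E} (h : 0 ≤ inner ℝ v u) {t : ℝ} (ht : 0 ≤ t) :
    t * ‖u‖ ≤ ‖v + t • u‖ :=
  pow_le_pow_iff_left₀ (by positivity) (norm_nonneg _) two_ne_zero |>.1 <| by
    nlinarith [norm_sq_add_sq_le_norm_add_smul_sq h ht]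

theorem Complex.exists_ne_zero_inner_eq_zero_inner_nonneg (s x : ℂ) :
    ∃ u : ℂ, u ≠ 0 ∧ inner ℝ s u = 0 ∧ 0 ≤ inner ℝ x u := by
  obtain ⟨v, hv, hsv⟩ : ∃ v : ℂ, v ≠ 0 ∧ inner ℝ s v = 0 := by
    rcases eq_or_ne s 0 with rfl | hs
    · exact ⟨1, one_ne_zero, inner_zero_left _⟩
    · refine ⟨I * s, mul_ne_zero I_ne_zero hs, ?_⟩
      simp only [Complex.inner, mul_re, mul_im, conj_re, conj_im, I_re, I_im]; ring
  rcases le_total 0 (inner ℝ x v) with hxv | hxv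
  · exact ⟨v, hv, hsv, hxv⟩
  · exact ⟨-v, neg_ne_zero.2 hv, by simp [hsv], by rw [inner_neg_right]; linarith⟩

theorem not_isBounded_image_Ici_of_tendsto_norm {E : Type*} [SeminormedAddCommGroup E]
    {g : ℝ → E} (hg : Tendsto (fun t => ‖g t‖) atTop atTop) : ¬ IsBounded (g '' Ici 0) := by
  intro hbdd
  obtain ⟨R, hR⟩ := isBounded_iff_forall_norm_le.1 hbdd
  obtain ⟨t, hRt, ht⟩ := ((hg.eventually_gt_atTop R).and (eventually_ge_atTop 0)).exists
  exact (hR _ (mem_image_of_mem g ht)).not_gt hRt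

theorem natDegree_C_mul_X_sq_add_C_mul_X {R : Type*} [Semiring R] {a b : R} (hb : b ≠ 0) :
    (C b * X ^ 2 + C a * X).natDegree = 2 := by
  compute_degree!

def symbolPII (a b : ℂ) (ζ : ℂ) : ℂ := a * ζ + b * ζ ^ 2

section symbolPII

variable {a b : ℂ}

theorem symbolPII_eq_eval (a b : ℂ) : symbolPII a b = (C b * X ^ 2 + C a * X).eval := by
  ext ζ
  simp only [symbolPII, eval_add, eval_mul, eval_C, eval_pow, eval_X]
  ring

theorem isOpenMap_symbolPII (hb : b ≠ 0) : IsOpenMap (symbolPII a b) := by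
  rw [symbolPII_eq_eval]
  exact (isOpenQuotientMap_eval _
    (by rw [natDegree_C_mul_X_sq_add_C_mul_X hb]; norm_num)).isOpenMap

@[fun_prop]
theorem continuous_symbolPII (a b : ℂ) : Continuous (symbolPII a b) := by
  unfold symbolPII; fun_prop

theorem Filter.Tendsto.norm_symbolPII_atTop {α : Type*} {l : Filter α} {g : α → ℂ} (hb : b ≠ 0)
    (hg : Tendsto (fun x => ‖g x‖) l atTop) :
    Tendsto (fun x => ‖symbolPII a b (g x)‖) l atTop := by
  rw [symbolPII_eq_eval]
  exact tendsto_norm_atTop _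
    (natDegree_pos_iff_degree_pos.1 (by rw [natDegree_C_mul_X_sq_add_C_mul_X hb]; norm_num)) hg

theorem symbolPII_sub_symbolPII (a b x y : ℂ) :
    symbolPII a b x - symbolPII a b y = (x - y) * (a + b * (x + y)) := by
  unfold symbolPII; ring

theorem one_lt_norm_of_mul_add_eq_neg {x y : ℂ} (h : 2 * ‖b‖ < ‖a‖) (hsum : b * (x + y) = -a)
    (hx : ‖x‖ ≤ 1) : 1 < ‖y‖ := by
  have : ‖a‖ ≤ ‖b‖ * (‖x‖ + ‖y‖) := by
    rw [← norm_neg a, ← hsum, norm_mul]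
    exact mul_le_mul_of_nonneg_left (norm_add_le x y) (norm_nonneg b)
  nlinarith [norm_nonneg b]

theorem injOn_symbolPII_sphere (h : 2 * ‖b‖ < ‖a‖) : InjOn (symbolPII a b) (sphere 0 1) := by
  intro x hx y hy hxy
  have hfactor := symbolPII_sub_symbolPII a b x y
  rw [hxy, sub_self, eq_comm, mul_eq_zero, sub_eq_zero] at hfactor
  refine hfactor.resolve_right fun hsum => ?_
  have := one_lt_norm_of_mul_add_eq_neg h (eq_neg_of_add_eq_zero_right hsum)
    (mem_sphere_zero_iff_norm.1 hx).le
  exact this.ne' (mem_sphere_zero_iff_norm.1 hy)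

theorem symbolPII_eq_iff {x y η : ℂ} (hb : b ≠ 0) (hsum : b * (x + y) = -a) :
    symbolPII a b η = symbolPII a b x ↔ η = x ∨ η = y := by
  have hfactor : symbolPII a b η - symbolPII a b x = b * (η - x) * (η - y) := by
    rw [symbolPII_sub_symbolPII]; linear_combination (η - x) * hsum
  rw [← sub_eq_zero, hfactor, mul_eq_zero, mul_eq_zero, sub_eq_zero, sub_eq_zero]
  simp [hb]

theorem symbolPII_mem_image_sphere_iff {x y : ℂ} (hb : b ≠ 0) (hsum : b * (x + y) = -a) :
    symbolPII a b x ∈ symbolPII a b '' sphere 0 1 ↔ ‖x‖ = 1 ∨ ‖y‖ = 1 := by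
  simp only [mem_image, mem_sphere_zero_iff_norm, symbolPII_eq_iff hb hsum]
  constructor
  · rintro ⟨η, hη, rfl | rfl⟩ <;> simp [hη]
  · rintro (hx | hy)
    · exact ⟨x, hx, Or.inl rfl⟩
    · exact ⟨y, hy, Or.inr rfl⟩

theorem isBounded_connectedComponentIn_of_norm_lt_one {x : ℂ} (hb : b ≠ 0) (hx : ‖x‖ < 1) :
    IsBounded (connectedComponentIn (symbolPII a b '' sphere 0 1)ᶜ (symbolPII a b x)) := by
  have hK : IsCompact (symbolPII a b '' closedBall 0 1) :=
    (isCompact_closedBall 0 1).image (continuous_symbolPII a b)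
  rw [← closedBall_sdiff_ball]
  have hcomp := (isOpenMap_symbolPII hb).connectedComponentIn_compl_image_diff_subset isOpen_ball
    hK.isClosed ball_subset_closedBall (mem_image_of_mem _ (mem_ball_zero_iff.2 hx))
  exact hK.isBounded.subset (hcomp.trans (image_mono ball_subset_closedBall))

theorem not_isBounded_connectedComponentIn_of_one_lt_norm {x y : ℂ} (hb : b ≠ 0)
    (hsum : b * (x + y) = -a) (hx : 1 < ‖x‖) (hy : 1 < ‖y‖) :
    ¬ IsBounded (connectedComponentIn (symbolPII a b '' sphere 0 1)ᶜ (symbolPII a b x)) := by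
  obtain ⟨u, hu, hsu, hxu⟩ := Complex.exists_ne_zero_inner_eq_zero_inner_nonneg (x + y) x
  have hyu : 0 ≤ inner ℝ y (-u) := by
    rw [inner_add_left] at hsu; rw [inner_neg_right]; linarith
  have hray : ∀ t ∈ Ici (0 : ℝ), symbolPII a b (x + t • u) ∈ (symbolPII a b '' sphere 0 1)ᶜ := by
    intro t ht
    have hsum' : b * ((x + t • u) + (y + t • -u)) = -a := by
      rw [smul_neg]; linear_combination hsum
    rw [mem_compl_iff, symbolPII_mem_image_sphere_iff hb hsum', not_or]
    exact ⟨(hx.trans_le (norm_le_norm_add_smul_of_inner_nonneg hxu ht)).ne',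
      (hy.trans_le (norm_le_norm_add_smul_of_inner_nonneg hyu ht)).ne'⟩
  have hsub : (fun t : ℝ => symbolPII a b (x + t • u)) '' Ici 0 ⊆
      connectedComponentIn (symbolPII a b '' sphere 0 1)ᶜ (symbolPII a b x) :=
    (isPreconnected_Ici.image _ (by fun_prop)).subset_connectedComponentIn
      ⟨0, self_mem_Ici, by simp⟩ (image_subset_iff.2 hray)
  have htendsto : Tendsto (fun t : ℝ => ‖x + t • u‖) atTop atTop :=
    tendsto_atTop_mono' _ ((eventually_ge_atTop 0).mono fun t ht =>
      mul_norm_le_norm_add_smul_of_inner_nonneg hxu ht)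
      (tendsto_id.atTop_mul_const (norm_pos_iff.2 hu))
  exact fun hbdd => not_isBounded_image_Ici_of_tendsto_norm (htendsto.norm_symbolPII_atTop hb)
    (hbdd.subset hsub)

end symbolPII

theorem roots_location_PII_general (a b : ℂ) (hb : b ≠ 0)
    (h : 2 * ‖b‖ < ‖a‖) :
    Set.InjOn (fun ζ : ℂ => a * ζ + b * ζ ^ 2) (Metric.sphere (0 : ℂ) 1) ∧
    ∀ z ζp ζm : ℂ,
      (∀ ζ : ℂ, b * ζ ^ 2 + a * ζ - z = b * (ζ - ζp) * (ζ - ζm)) →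
      (z ∉ (fun ζ : ℂ => a * ζ + b * ζ ^ 2) '' Metric.sphere (0 : ℂ) 1 →
        Bornology.IsBounded (connectedComponentIn
          ((fun ζ : ℂ => a * ζ + b * ζ ^ 2) '' Metric.sphere (0 : ℂ) 1)ᶜ z) →
        (‖ζp‖ < 1 ∧ 1 < ‖ζm‖) ∨
        (‖ζm‖ < 1 ∧ 1 < ‖ζp‖)) ∧
      (z ∈ (fun ζ : ℂ => a * ζ + b * ζ ^ 2) '' Metric.sphere (0 : ℂ) 1 →
        (‖ζp‖ = 1 ∧ 1 < ‖ζm‖) ∨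
        (‖ζm‖ = 1 ∧ 1 < ‖ζp‖)) ∧
      (z ∉ (fun ζ : ℂ => a * ζ + b * ζ ^ 2) '' Metric.sphere (0 : ℂ) 1 →
        ¬ Bornology.IsBounded (connectedComponentIn
          ((fun ζ : ℂ => a * ζ + b * ζ ^ 2) '' Metric.sphere (0 : ℂ) 1)ᶜ z) →
        1 < ‖ζp‖ ∧ 1 < ‖ζm‖) := by
  refine ⟨injOn_symbolPII_sphere h, fun z ζp ζm hfac => ?_⟩
  have hsum : b * (ζp + ζm) = -a := by linear_combination hfac 1 - hfac 0
  have hsum' : b * (ζm + ζp) = -a := by rw [add_comm, hsum]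
  obtain rfl : symbolPII a b ζp = z := by unfold symbolPII; linear_combination hfac ζp
  have hzm : symbolPII a b ζm = symbolPII a b ζp := (symbolPII_eq_iff hb hsum).2 (Or.inr rfl)
  have hγ : symbolPII a b ζp ∈ symbolPII a b '' sphere 0 1 ↔ ‖ζp‖ = 1 ∨ ‖ζm‖ = 1 :=
    symbolPII_mem_image_sphere_iff hb hsum
  refine ⟨fun hz hbdd => ?_, fun hz => ?_, fun hz hunb => ?_⟩
  · obtain ⟨hp1, hm1⟩ := not_or.1 (hγ.not.1 hz)
    rcases lt_or_ge ‖ζp‖ 1 with hp | hp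
    · exact Or.inl ⟨hp, one_lt_norm_of_mul_add_eq_neg h hsum hp.le⟩
    rcases lt_or_ge ‖ζm‖ 1 with hm | hm
    · exact Or.inr ⟨hm, one_lt_norm_of_mul_add_eq_neg h hsum' hm.le⟩
    exact absurd hbdd <| not_isBounded_connectedComponentIn_of_one_lt_norm hb hsum
      (hp.lt_of_ne' hp1) (hm.lt_of_ne' hm1)
  · rcases hγ.1 hz with hp | hm
    · exact Or.inl ⟨hp, one_lt_norm_of_mul_add_eq_neg h hsum hp.le⟩
    · exact Or.inr ⟨hm, one_lt_norm_of_mul_add_eq_neg h hsum' hm.le⟩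
  · obtain ⟨hp1, hm1⟩ := not_or.1 (hγ.not.1 hz)
    have hp : ¬ ‖ζp‖ < 1 := fun hp => hunb (isBounded_connectedComponentIn_of_norm_lt_one hb hp)
    have hm : ¬ ‖ζm‖ < 1 := fun hm =>
      hunb (hzm ▸ isBounded_connectedComponentIn_of_norm_lt_one hb hm)
    exact ⟨(not_lt.1 hp).lt_of_ne' hp1, (not_lt.1 hm).lt_of_ne' hm1⟩

/-- Let `f(ζ) = a ζ + b ζ²` with `2|b| < |a|`.  Then `f` is injective on the
unit circle, so `γ = f(S¹)` is a Jordan curve.  For the two roots `ζ₊, ζ₋` of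
`b ζ² + a ζ − z = 0` (encoded by the factorization): if `z` lies in the bounded
component `Γ` of `ℂ \ γ` then one root is in the open unit disc and the other
outside the closed disc; if `z ∈ γ` then one root is on `S¹` and the other
outside the closed disc; and if `z` lies in the unbounded component then both
roots are outside the closed unit disc. -/
theorem roots_location_PII (a b : ℂ) (ha : a ≠ 0) (hb : b ≠ 0)
    (h : 2 * ‖b‖ < ‖a‖) :
    Set.InjOn (fun ζ : ℂ => a * ζ + b * ζ ^ 2) (Metric.sphere (0 : ℂ) 1) ∧
    ∀ z ζp ζm : ℂ,
      (∀ ζ : ℂ, b * ζ ^ 2 + a * ζ - z = b * (ζ - ζp) * (ζ - ζm)) →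
      (z ∉ (fun ζ : ℂ => a * ζ + b * ζ ^ 2) '' Metric.sphere (0 : ℂ) 1 →
        Bornology.IsBounded (connectedComponentIn
          ((fun ζ : ℂ => a * ζ + b * ζ ^ 2) '' Metric.sphere (0 : ℂ) 1)ᶜ z) →
        (‖ζp‖ < 1 ∧ 1 < ‖ζm‖) ∨
        (‖ζm‖ < 1 ∧ 1 < ‖ζp‖)) ∧
      (z ∈ (fun ζ : ℂ => a * ζ + b * ζ ^ 2) '' Metric.sphere (0 : ℂ) 1 →
        (‖ζp‖ = 1 ∧ 1 < ‖ζm‖) ∨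
        (‖ζm‖ = 1 ∧ 1 < ‖ζp‖)) ∧
      (z ∉ (fun ζ : ℂ => a * ζ + b * ζ ^ 2) '' Metric.sphere (0 : ℂ) 1 →
        ¬ Bornology.IsBounded (connectedComponentIn
          ((fun ζ : ℂ => a * ζ + b * ζ ^ 2) '' Metric.sphere (0 : ℂ) 1)ᶜ z) →
        1 < ‖ζp‖ ∧ 1 < ‖ζm‖) :=
  roots_location_PII_general a b hb h
end

section
/- Let a, b ∈ ℂ with a ≠ 0 and 2|b| ≤ |a|. Then the map ζ ↦ a ζ + b ζ² is injective on the unit circle S¹ = {ζ ∈ ℂ : |ζ| = 1}. -/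
/-! Two distinct points `ζ ≠ η` with the same image force `a = -b (ζ + η)`. On the unit
circle strict convexity gives `‖ζ + η‖ < 2`, so `‖a‖ < 2 ‖b‖` unless `b = 0`, and `b = 0`
would make `a = 0`. -/

lemma eq_neg_mul_add_of_quadratic_eq {K : Type*} [Field K] {a b x y : K}
    (hxy : a * x + b * x ^ 2 = a * y + b * y ^ 2) (hne : x ≠ y) : a = -(b * (x + y)) := by
  have hfactor : (a + b * (x + y)) * (x - y) = 0 := by linear_combination hxy
  rcases mul_eq_zero.mp hfactor with h | h
  · exact eq_neg_of_add_eq_zero_left h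
  · exact absurd (sub_eq_zero.mp h) hne

lemma norm_add_lt_two_of_ne {E : Type*} [NormedAddCommGroup E] [NormedSpace ℝ E]
    [StrictConvexSpace ℝ E] {x y : E} (hx : ‖x‖ = 1) (hy : ‖y‖ = 1) (hne : x ≠ y) :
    ‖x + y‖ < 2 := by
  have hlt : ‖x + y‖ < ‖x‖ + ‖y‖ :=
    (norm_add_le x y).lt_of_ne (mt (eq_of_norm_eq_of_norm_add_eq (hx.trans hy.symm)) hne)
  linarith

/-- If `a ≠ 0` and `2|b| ≤ |a|`, the symbol `ζ ↦ a ζ + b ζ²` of `P_II` is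
injective on the unit circle. -/
theorem symbol_PII_injOn_circle (a b : ℂ) (ha : a ≠ 0)
    (h : 2 * ‖b‖ ≤ ‖a‖) :
    Set.InjOn (fun ζ : ℂ => a * ζ + b * ζ ^ 2) (Metric.sphere (0 : ℂ) 1) := by
  intro x hx y hy hxy
  rw [mem_sphere_zero_iff_norm] at hx hy
  by_contra hne
  have ha_eq : a = -(b * (x + y)) := eq_neg_mul_add_of_quadratic_eq hxy hne
  have hb : b ≠ 0 := by
    rintro rfl
    exact ha (by simpa using ha_eq)
  have hlt : ‖a‖ < 2 * ‖b‖ :=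
    calc ‖a‖ = ‖b‖ * ‖x + y‖ := by rw [ha_eq, norm_neg, norm_mul]
      _ < ‖b‖ * 2 :=
        mul_lt_mul_of_pos_left (norm_add_lt_two_of_ne hx hy hne) (norm_pos_iff.mpr hb)
      _ = 2 * ‖b‖ := mul_comm _ _
  linarith
end

section
/- Let N ≥ 1, let a, b ∈ ℂ \ {0}, and let z ∈ ℂ be such that the two roots ζ_+, ζ_- of a ζ² − z ζ + b = 0 are distinct. Let 𝒫(z) be the (N+1)×(N+1) lower-triangular matrix with entries 𝒫_{j,j} = a, 𝒫_{j+1,j} = −z, 𝒫_{j+2,j} = b, and all other entries 0. Then 𝒫(z) is invertible with det 𝒫(z) = a^{N+1}, and its inverse is the lower-triangular Toeplitz matrix with entries (𝒫(z)^{-1})_{j,k} = c_{j−k} for j ≥ k and 0 for j < k, where c_ν = (ζ_+^{ν+1} − ζ_-^{ν+1})/(a(ζ_+ − ζ_-)) for ν ≥ 0. -/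
noncomputable section

/-- The (N+1)×(N+1) lower-triangular Grushin matrix `𝒫(z)` with `a` on the
diagonal, `−z` on the first subdiagonal and `b` on the second subdiagonal. -/
def grushinP (N : ℕ) (a b z : ℂ) : Matrix (Fin (N + 1)) (Fin (N + 1)) ℂ :=
  fun j k =>
    if (j : ℕ) = (k : ℕ) then a
    else if (k : ℕ) + 1 = (j : ℕ) then -z
    else if (k : ℕ) + 2 = (j : ℕ) then b
    else 0

/-- The candidate inverse: the lower-triangular Toeplitz matrix with entries
`c_{j−k} = (ζ₊^{j−k+1} − ζ₋^{j−k+1})/(a(ζ₊ − ζ₋))` for `j ≥ k`. -/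
def grushinE (N : ℕ) (a ζp ζm : ℂ) : Matrix (Fin (N + 1)) (Fin (N + 1)) ℂ :=
  fun j k =>
    if (k : ℕ) ≤ (j : ℕ) then
      (ζp ^ ((j : ℕ) - (k : ℕ) + 1) - ζm ^ ((j : ℕ) - (k : ℕ) + 1)) / (a * (ζp - ζm))
    else 0

lemma sum_shift {n : ℕ} (g : Fin n → ℂ) (c j : ℕ) :
    ∑ l : Fin n, (if (l : ℕ) + c = j then g l else 0)
      = if h : c ≤ j ∧ j - c < n then g ⟨j - c, h.2⟩ else 0 := by
  split_ifs with h
  · rw [Finset.sum_eq_single (⟨j - c, h.2⟩ : Fin n)]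
    · rw [if_pos (by simp; omega)]
    · intro l _ hl
      rw [if_neg]
      intro hc
      exact hl (Fin.ext (by simp; omega))
    · simp
  · apply Finset.sum_eq_zero
    intro l _
    rw [if_neg]
    have := l.isLt
    omega

/-- `𝒫(z)` has determinant `a^{N+1}` and is invertible, with inverse the
lower-triangular Toeplitz matrix with entries
`c_ν = (ζ₊^{ν+1} − ζ₋^{ν+1})/(a(ζ₊ − ζ₋))`, where `ζ₊ ≠ ζ₋` are the roots of
`a ζ² − z ζ + b = 0`. -/
theorem grushinP_det_and_inverse (N : ℕ) (hN : 1 ≤ N) (a b : ℂ)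
    (ha : a ≠ 0) (hb : b ≠ 0) (z ζp ζm : ℂ)
    (hp : a * ζp ^ 2 - z * ζp + b = 0) (hm : a * ζm ^ 2 - z * ζm + b = 0)
    (hne : ζp ≠ ζm) :
    (grushinP N a b z).det = a ^ (N + 1) ∧
    grushinP N a b z * grushinE N a ζp ζm = 1 ∧
    grushinE N a ζp ζm * grushinP N a b z = 1 := by
  have hsub : ζp - ζm ≠ 0 := sub_ne_zero.mpr hne
  have hfac : (ζp - ζm) * (a * (ζp + ζm) - z) = 0 := by linear_combination hp - hm
  have hz : z = a * (ζp + ζm) :=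
    (sub_eq_zero.mp ((mul_eq_zero.mp hfac).resolve_left hsub)).symm
  have hbv : b = a * (ζp * ζm) := by linear_combination hp + ζp * hz
  subst hz
  subst hbv
  set z := a * (ζp + ζm) with hzdef
  set b := a * (ζp * ζm) with hbdef
  have key : grushinP N a b z * grushinE N a ζp ζm = 1 := by
    ext j k
    rw [Matrix.mul_apply, Matrix.one_apply]
    have expand : ∀ l : Fin (N + 1),
        grushinP N a b z j l * grushinE N a ζp ζm l k =
          (if (l : ℕ) + 0 = (j : ℕ) then a * grushinE N a ζp ζm l k else 0)
        + (if (l : ℕ) + 1 = (j : ℕ) then (-z) * grushinE N a ζp ζm l k else 0)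
        + (if (l : ℕ) + 2 = (j : ℕ) then b * grushinE N a ζp ζm l k else 0) := by
      intro l
      simp only [grushinP]
      split_ifs <;> first | omega | ring
    rw [Finset.sum_congr rfl (fun l _ => expand l), Finset.sum_add_distrib,
      Finset.sum_add_distrib, sum_shift, sum_shift, sum_shift]
    have hjN : (j : ℕ) < N + 1 := j.isLt
    have hkN : (k : ℕ) < N + 1 := k.isLt
    simp only [grushinE, Fin.ext_iff, Nat.sub_zero]
    rw [hzdef, hbdef]
    rcases Nat.lt_or_ge (j : ℕ) (k : ℕ) with hlt | hge
    · split_ifs <;> first | omega | simp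
    · rcases Nat.lt_or_ge (j : ℕ) ((k : ℕ) + 1) with h1 | h2
      · -- j = k
        have e0 : (j : ℕ) - (k : ℕ) + 1 = 1 := by omega
        rw [e0]
        split_ifs <;> first | omega | (field_simp <;> ring)
      · rcases Nat.lt_or_ge (j : ℕ) ((k : ℕ) + 2) with h3 | h4
        · -- j = k + 1
          have e1 : (j : ℕ) - (k : ℕ) + 1 = 2 := by omega
          have e2 : (j : ℕ) - 1 - (k : ℕ) + 1 = 1 := by omega
          rw [e1, e2]
          split_ifs <;> first | omega | (field_simp <;> ring)
        · -- j ≥ k + 2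
          obtain ⟨m, hm2⟩ : ∃ m, (j : ℕ) - (k : ℕ) = m + 2 := ⟨(j:ℕ) - (k:ℕ) - 2, by omega⟩
          have e1 : (j : ℕ) - (k : ℕ) + 1 = m + 3 := by omega
          have e2 : (j : ℕ) - 1 - (k : ℕ) + 1 = m + 2 := by omega
          have e3 : (j : ℕ) - 2 - (k : ℕ) + 1 = m + 1 := by omega
          rw [e1, e2, e3]
          split_ifs <;> first | omega | (field_simp <;> ring)
  refine ⟨?_, key, mul_eq_one_comm.mp key⟩
  rw [Matrix.det_of_lowerTriangular _ ?_]
  · have hdiag : ∀ i : Fin (N + 1), grushinP N a b z i i = a := by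
      intro i; simp [grushinP]
    simp [hdiag]
  · intro i j hij
    have h' : (i : ℕ) < (j : ℕ) := hij
    simp only [grushinP]
    rw [if_neg (by omega), if_neg (by omega), if_neg (by omega)]
end
end

section
/- Let N ≥ 1, let a ∈ ℂ \ {0}, and let ζ_+, ζ_- ∈ ℂ \ {0} with ζ_+ ≠ ζ_- and |ζ_+| ≤ |ζ_-| ≤ 1. Then |(ζ_+^{N+1} − ζ_-^{N+1})/(a(ζ_+ − ζ_-))| ≤ (|ζ_-|^N / |a|) · min(N + 1, 2/|1 − ζ_+/ζ_-|). -/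
/-
Factor `x^(n+1) - y^(n+1) = (x - y) Σ xⁱ y^(n-i)`: each of the `n + 1` terms has norm at most
`‖y‖ⁿ` because `‖x‖ ≤ ‖y‖`. For the second bound, the triangle inequality gives
`‖x^(n+1) - y^(n+1)‖ ≤ 2‖y‖^(n+1)`, and `‖x - y‖ / ‖y‖ = ‖1 - x / y‖`.
-/

section

variable {𝕜 : Type*} [NormedField 𝕜] {x y : 𝕜}

theorem norm_pow_succ_sub_pow_succ_le (n : ℕ) (h : ‖x‖ ≤ ‖y‖) :
    ‖x ^ (n + 1) - y ^ (n + 1)‖ ≤ (n + 1) * ‖y‖ ^ n * ‖x - y‖ := by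
  have hterm : ∀ i ∈ Finset.range (n + 1), ‖x ^ i * y ^ (n - i)‖ ≤ ‖y‖ ^ n := by
    intro i hi
    rw [norm_mul, norm_pow, norm_pow,
      ← pow_mul_pow_sub ‖y‖ (Nat.lt_succ_iff.mp (Finset.mem_range.mp hi))]
    gcongr
  calc ‖x ^ (n + 1) - y ^ (n + 1)‖
      = ‖∑ i ∈ Finset.range (n + 1), x ^ i * y ^ (n - i)‖ * ‖x - y‖ := by
        simpa only [norm_mul, Nat.add_sub_cancel] using
          congrArg norm (geom_sum₂_mul x y (n + 1)).symm
    _ ≤ (n + 1) * ‖y‖ ^ n * ‖x - y‖ := by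
        gcongr
        simpa using norm_sum_le_of_le _ hterm

theorem norm_pow_sub_pow_le_two_mul (n : ℕ) (h : ‖x‖ ≤ ‖y‖) :
    ‖x ^ n - y ^ n‖ ≤ 2 * ‖y‖ ^ n :=
  calc ‖x ^ n - y ^ n‖ ≤ ‖x‖ ^ n + ‖y‖ ^ n := by
        simpa only [norm_pow] using norm_sub_le (x ^ n) (y ^ n)
    _ ≤ 2 * ‖y‖ ^ n := by
        rw [two_mul]
        gcongr

theorem norm_one_sub_div (hy : y ≠ 0) : ‖1 - x / y‖ = ‖x - y‖ / ‖y‖ := by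
  rw [one_sub_div hy, norm_div, norm_sub_rev]

theorem norm_pow_succ_sub_pow_succ_div_sub_le (n : ℕ) (hne : x ≠ y) (hy : y ≠ 0)
    (h : ‖x‖ ≤ ‖y‖) :
    ‖(x ^ (n + 1) - y ^ (n + 1)) / (x - y)‖
      ≤ ‖y‖ ^ n * min ((n : ℝ) + 1) (2 / ‖1 - x / y‖) := by
  have hd : 0 < ‖x - y‖ := norm_pos_iff.mpr (sub_ne_zero.mpr hne)
  have hy' : 0 < ‖y‖ := norm_pos_iff.mpr hy
  rw [norm_div, mul_min_of_nonneg _ _ (pow_nonneg hy'.le n), norm_one_sub_div hy]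
  refine le_min ?_ ?_ <;> rw [div_le_iff₀ hd]
  · exact (norm_pow_succ_sub_pow_succ_le n h).trans_eq (by ring)
  · calc ‖x ^ (n + 1) - y ^ (n + 1)‖ ≤ 2 * ‖y‖ ^ (n + 1) :=
          norm_pow_sub_pow_le_two_mul _ h
      _ = ‖y‖ ^ n * (2 / (‖x - y‖ / ‖y‖)) * ‖x - y‖ := by
        field_simp
        ring

end

theorem Empm_bound_general (N : ℕ) (a : ℂ)
    (ζp ζm : ℂ) (hm : ζm ≠ 0) (hne : ζp ≠ ζm)
    (h1 : ‖ζp‖ ≤ ‖ζm‖) :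
    ‖(ζp ^ (N + 1) - ζm ^ (N + 1)) / (a * (ζp - ζm))‖
      ≤ ‖ζm‖ ^ N / ‖a‖ *
          min ((N : ℝ) + 1) (2 / ‖1 - ζp / ζm‖) := by
  rw [mul_comm a, ← div_div, norm_div, div_mul_eq_mul_div]
  exact div_le_div_of_nonneg_right
    (norm_pow_succ_sub_pow_succ_div_sub_le N hne hm h1) (norm_nonneg a)

/-- Bound on the effective Hamiltonian `E_{-+} = (ζ₊^{N+1} − ζ₋^{N+1})/(a(ζ₊ − ζ₋))`:
`|E_{-+}| ≤ (|ζ₋|^N/|a|) min(N+1, 2/|1 − ζ₊/ζ₋|)`. -/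
theorem Empm_bound (N : ℕ) (hN : 1 ≤ N) (a : ℂ) (ha : a ≠ 0)
    (ζp ζm : ℂ) (hp : ζp ≠ 0) (hm : ζm ≠ 0) (hne : ζp ≠ ζm)
    (h1 : ‖ζp‖ ≤ ‖ζm‖) (h2 : ‖ζm‖ ≤ 1) :
    ‖(ζp ^ (N + 1) - ζm ^ (N + 1)) / (a * (ζp - ζm))‖
      ≤ ‖ζm‖ ^ N / ‖a‖ *
          min ((N : ℝ) + 1) (2 / ‖1 - ζp / ζm‖) :=
  Empm_bound_general N a ζp ζm hm hne h1
end

section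
/- Let N ≥ 2, a ∈ ℂ \ {0}, and let ζ_+, ζ_- ∈ ℂ \ {0} with ζ_+ ≠ ζ_-, |ζ_+| ≤ |ζ_-| < 1. Define c_k = (ζ_+^{k+1} − ζ_-^{k+1})/(a(ζ_+ − ζ_-)) for k ≥ 0. Let E be the N×N matrix with E_{j,k} = c_{j−k−1} when j ≥ k + 1 and E_{j,k} = 0 otherwise, and let E_+ = (c_0, c_1, …, c_{N−1})^t ∈ ℂ^N and E_- = (c_{N−1}, …, c_1, c_0) ∈ ℂ^N. Then, with ‖·‖ the operator norm on ℓ²(ℂ^N) and the Euclidean norm on vectors: ‖E‖ ≤ |a|^{-1} · min(N, 2/(1 − |ζ_-|)) · min(N, 2/(1 − |ζ_-|), 2/|1 − ζ_+/ζ_-|), and ‖E_+‖ = ‖E_-‖ ≤ |a|^{-1} · min(N, 2/(1 − |ζ_-|))^{1/2} · min(N, 2/(1 − |ζ_-|), 2/|1 − ζ_+/ζ_-|). -/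
/-!
With `r = ζ₊/ζ₋` one has `c_k = a⁻¹ ζ₋^k (1 + r + ⋯ + r^k)`, hence
`|a| |c_k| ≤ min (k + 1, 2/|1 - r|) x^k` with `x = |ζ₋|`. Since also
`∑_{k<N} (k+1) x^k ≤ (∑_{k<N} x^k) · min (N, 1/(1-x))`, this gives `∑_{k<N} |c_k| ≤ |a|⁻¹ A B`
and `|c_k| ≤ |a|⁻¹ B` for `k < N`, where `A`, `B` are the two minima of the bound.
Every row and column of the Toeplitz matrix `E` has `ℓ¹` norm at most `∑_{k<N} |c_k|`, so the
Schur test bounds `‖E‖`; and `‖E₊‖² = ∑ |c_k|² ≤ max |c_k| · ∑ |c_k|`, while `E₋` is `E₊` reversed.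
-/

noncomputable section

/-- `c_k = (ζ₊^{k+1} − ζ₋^{k+1})/(a(ζ₊ − ζ₋))`. -/
def grushinC (a ζp ζm : ℂ) (k : ℕ) : ℂ :=
  (ζp ^ (k + 1) - ζm ^ (k + 1)) / (a * (ζp - ζm))

/-- The N×N strictly lower-triangular Toeplitz block `E` with
`E_{j,k} = c_{j−k−1}` for `j ≥ k + 1`. -/
def grushinEblock (N : ℕ) (a ζp ζm : ℂ) : Matrix (Fin N) (Fin N) ℂ :=
  fun j k =>
    if (k : ℕ) + 1 ≤ (j : ℕ) then grushinC a ζp ζm ((j : ℕ) - (k : ℕ) - 1) else 0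

/-- `E₊ = (c_0, …, c_{N−1})ᵗ` as a vector in Euclidean space. -/
def grushinEp (N : ℕ) (a ζp ζm : ℂ) : EuclideanSpace ℂ (Fin N) :=
  WithLp.toLp 2 fun j => grushinC a ζp ζm (j : ℕ)

/-- `E₋ = (c_{N−1}, …, c_0)` as a vector in Euclidean space. -/
def grushinEm (N : ℕ) (a ζp ζm : ℂ) : EuclideanSpace ℂ (Fin N) :=
  WithLp.toLp 2 fun k => grushinC a ζp ζm (N - 1 - (k : ℕ))

open Finset

lemma norm_sum_mul_sq_le {ι R : Type*} [SeminormedRing R] (s : Finset ι) (a v : ι → R) :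
    ‖∑ i ∈ s, a i * v i‖ ^ 2 ≤ (∑ i ∈ s, ‖a i‖) * ∑ i ∈ s, ‖a i‖ * ‖v i‖ ^ 2 := by
  calc ‖∑ i ∈ s, a i * v i‖ ^ 2 ≤ (∑ i ∈ s, ‖a i‖ * ‖v i‖) ^ 2 := by
        gcongr
        exact (norm_sum_le s _).trans (sum_le_sum fun i _ => norm_mul_le _ _)
    _ ≤ _ := sum_sq_le_sum_mul_sum_of_sq_le_mul s (fun i _ => norm_nonneg _)
        (fun i _ => by positivity) (fun i _ => (by ring : _ = _).le)

section SchurTest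

variable {𝕜 : Type*} [RCLike 𝕜] {n : Type*} [Fintype n] [DecidableEq n]

theorem Matrix.norm_toEuclideanCLM_le_of_sum_norm_le (M : Matrix n n 𝕜) {r : ℝ} (hr : 0 ≤ r)
    (hrow : ∀ i, ∑ j, ‖M i j‖ ≤ r) (hcol : ∀ j, ∑ i, ‖M i j‖ ≤ r) :
    ‖Matrix.toEuclideanCLM (𝕜 := 𝕜) M‖ ≤ r := by
  refine ContinuousLinearMap.opNorm_le_bound _ hr fun v => ?_
  rw [← pow_le_pow_iff_left₀ (norm_nonneg _) (by positivity) two_ne_zero,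
    EuclideanSpace.norm_sq_eq, mul_pow, EuclideanSpace.norm_sq_eq]
  calc ∑ i, ‖(Matrix.toEuclideanCLM (𝕜 := 𝕜) M v) i‖ ^ 2
      ≤ ∑ i, r * ∑ j, ‖M i j‖ * ‖v j‖ ^ 2 := by
        refine sum_le_sum fun i _ => ?_
        have hMv : (Matrix.toEuclideanCLM (𝕜 := 𝕜) M v) i = ∑ j, M i j * v j := rfl
        refine hMv ▸ (norm_sum_mul_sq_le _ _ _).trans ?_
        gcongr
        exact hrow i
    _ = r * ∑ j, (∑ i, ‖M i j‖) * ‖v j‖ ^ 2 := by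
        simp only [← mul_sum, sum_mul]
        rw [sum_comm]
    _ ≤ r * ∑ j, r * ‖v j‖ ^ 2 := by
        gcongr with j
        exact hcol j
    _ = r ^ 2 * ∑ j, ‖v j‖ ^ 2 := by rw [← mul_sum]; ring

end SchurTest

lemma Finset.sum_comp_le_sum_of_injOn {ι κ M : Type*} [AddCommMonoid M] [PartialOrder M]
    [IsOrderedAddMonoid M] {s : Finset ι} {t : Finset κ} {σ : ι → κ} (f : κ → M)
    (hf : ∀ k ∈ t, 0 ≤ f k) (hσ : Set.InjOn σ s) (hst : Set.MapsTo σ s t) :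
    ∑ i ∈ s, f (σ i) ≤ ∑ k ∈ t, f k := by
  classical
  rw [← sum_image hσ]
  exact sum_le_sum_of_subset_of_nonneg (image_subset_iff.2 hst) fun k hk _ => hf k hk

section GeomSum

variable {x : ℝ}

lemma geom_sum_le_min (hx0 : 0 ≤ x) (hx1 : x < 1) (n : ℕ) :
    ∑ i ∈ range n, x ^ i ≤ min (n : ℝ) (1 / (1 - x)) := by
  refine le_min ?_ ?_
  · calc ∑ i ∈ range n, x ^ i ≤ ∑ _i ∈ range n, (1 : ℝ) :=
          sum_le_sum fun i _ => pow_le_one₀ hx0 hx1.le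
      _ = n := by simp
  · simpa only [← range_eq_Ico, pow_zero] using
      geom_sum_Ico_le_of_lt_one (m := 0) (n := n) hx0 hx1

lemma succ_mul_pow_le_min (hx0 : 0 ≤ x) (hx1 : x < 1) (k : ℕ) :
    ((k : ℝ) + 1) * x ^ k ≤ min ((k : ℝ) + 1) (1 / (1 - x)) := by
  calc ((k : ℝ) + 1) * x ^ k = ∑ _i ∈ range (k + 1), x ^ k := by simp
    _ ≤ ∑ i ∈ range (k + 1), x ^ i := sum_le_sum fun i hi =>
        pow_le_pow_of_le_one hx0 hx1.le (Nat.lt_succ_iff.1 (mem_range.1 hi))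
    _ ≤ _ := by exact_mod_cast geom_sum_le_min hx0 hx1 (k + 1)

lemma one_sub_mul_sum_succ_mul_pow (n : ℕ) :
    (1 - x) * ∑ k ∈ range n, ((k : ℝ) + 1) * x ^ k = ∑ k ∈ range n, x ^ k - n * x ^ n := by
  induction n with
  | zero => simp
  | succ n ih =>
    rw [sum_range_succ, sum_range_succ, mul_add, ih]
    push_cast
    ring

lemma sum_succ_mul_pow_le (hx0 : 0 ≤ x) (hx1 : x < 1) (n : ℕ) :
    ∑ k ∈ range n, ((k : ℝ) + 1) * x ^ k
      ≤ (∑ k ∈ range n, x ^ k) * min (n : ℝ) (1 / (1 - x)) := by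
  rw [mul_min_of_nonneg _ _ (sum_nonneg fun k _ => pow_nonneg hx0 k)]
  refine le_min ?_ ?_
  · rw [sum_mul]
    refine sum_le_sum fun k hk => ?_
    rw [mul_comm]
    gcongr
    exact_mod_cast mem_range.1 hk
  · rw [mul_one_div, le_div_iff₀ (sub_pos.2 hx1), mul_comm, one_sub_mul_sum_succ_mul_pow]
    have hnx : 0 ≤ (n : ℝ) * x ^ n := by positivity
    linarith

end GeomSum

lemma norm_geom_sum_le_min {K : Type*} [NormedDivisionRing K] {r : K} (hr : ‖r‖ ≤ 1)
    (hr1 : r ≠ 1) (n : ℕ) : ‖∑ i ∈ range n, r ^ i‖ ≤ min (n : ℝ) (2 / ‖1 - r‖) := by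
  refine le_min ?_ ?_
  · calc ‖∑ i ∈ range n, r ^ i‖ ≤ ∑ i ∈ range n, ‖r ^ i‖ := norm_sum_le _ _
      _ ≤ ∑ _i ∈ range n, (1 : ℝ) := sum_le_sum fun i _ => by
          rw [norm_pow]
          exact pow_le_one₀ (norm_nonneg _) hr
      _ = n := by simp
  · rw [geom_sum_eq hr1, norm_div, norm_sub_rev r 1]
    refine div_le_div_of_nonneg_right ?_ (norm_nonneg _)
    calc ‖r ^ n - 1‖ ≤ ‖r ^ n‖ + ‖(1 : K)‖ := norm_sub_le _ _
      _ ≤ 1 + 1 := by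
          rw [norm_pow, norm_one]
          gcongr
          exact pow_le_one₀ (norm_nonneg _) hr
      _ = 2 := one_add_one_eq_two

section Coefficients

variable {a ζp ζm : ℂ}

lemma grushinC_eq_geom_sum (hm : ζm ≠ 0) (hne : ζp ≠ ζm) (k : ℕ) :
    grushinC a ζp ζm k = a⁻¹ * ζm ^ k * ∑ i ∈ range (k + 1), (ζp / ζm) ^ i := by
  have hr : ζp / ζm ≠ 1 := by rwa [ne_eq, div_eq_one_iff_eq hm]
  have hd : ζp / ζm - 1 = (ζp - ζm) / ζm := by field_simp
  rw [geom_sum_eq hr, grushinC, hd, div_pow]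
  field_simp
  ring

lemma norm_grushinC_le (hm : ζm ≠ 0) (hne : ζp ≠ ζm) (h1 : ‖ζp‖ ≤ ‖ζm‖) (k : ℕ) :
    ‖grushinC a ζp ζm k‖
      ≤ ‖a‖⁻¹ * (min ((k : ℝ) + 1) (2 / ‖1 - ζp / ζm‖) * ‖ζm‖ ^ k) := by
  have hr : ‖ζp / ζm‖ ≤ 1 := by
    rw [norm_div]
    exact div_le_one_of_le₀ h1 (norm_nonneg _)
  have hr1 : ζp / ζm ≠ 1 := by rwa [ne_eq, div_eq_one_iff_eq hm]
  rw [grushinC_eq_geom_sum hm hne, norm_mul, norm_mul, norm_inv, norm_pow, mul_assoc,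
    mul_comm (‖ζm‖ ^ k)]
  gcongr
  exact_mod_cast norm_geom_sum_le_min hr hr1 (k + 1)

lemma norm_grushinC_le_of_lt (hm : ζm ≠ 0) (hne : ζp ≠ ζm) (h1 : ‖ζp‖ ≤ ‖ζm‖)
    (h2 : ‖ζm‖ < 1) {N k : ℕ} (hk : k < N) :
    ‖grushinC a ζp ζm k‖
      ≤ ‖a‖⁻¹ * min (N : ℝ) (min (2 / (1 - ‖ζm‖)) (2 / ‖1 - ζp / ζm‖)) := by
  have hx0 : 0 ≤ ‖ζm‖ := norm_nonneg _
  refine (norm_grushinC_le hm hne h1 k).trans (mul_le_mul_of_nonneg_left ?_ (by positivity))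
  rw [min_mul_of_nonneg _ _ (pow_nonneg hx0 k), ← min_assoc]
  refine min_le_min ((succ_mul_pow_le_min hx0 h2 k).trans (min_le_min ?_ ?_)) ?_
  · exact_mod_cast hk
  · exact div_le_div_of_nonneg_right one_le_two (sub_pos.2 h2).le
  · exact mul_le_of_le_one_right (by positivity) (pow_le_one₀ hx0 h2.le)

lemma sum_norm_grushinC_le (hm : ζm ≠ 0) (hne : ζp ≠ ζm) (h1 : ‖ζp‖ ≤ ‖ζm‖)
    (h2 : ‖ζm‖ < 1) (N : ℕ) :
    ∑ k ∈ range N, ‖grushinC a ζp ζm k‖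
      ≤ ‖a‖⁻¹ * (min (N : ℝ) (2 / (1 - ‖ζm‖)) *
          min (N : ℝ) (min (2 / (1 - ‖ζm‖)) (2 / ‖1 - ζp / ζm‖))) := by
  set x := ‖ζm‖
  set C := 2 / ‖1 - ζp / ζm‖
  set A := min (N : ℝ) (2 / (1 - x))
  have hx0 : 0 ≤ x := norm_nonneg _
  have hS := geom_sum_le_min hx0 h2 N
  have hA : min (N : ℝ) (1 / (1 - x)) ≤ A :=
    min_le_min_left _ (div_le_div_of_nonneg_right one_le_two (sub_pos.2 h2).le)
  have hA0 : 0 ≤ A := le_min (Nat.cast_nonneg N) (div_nonneg zero_le_two (sub_pos.2 h2).le)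
  calc ∑ k ∈ range N, ‖grushinC a ζp ζm k‖
      ≤ ∑ k ∈ range N, ‖a‖⁻¹ * min (((k : ℝ) + 1) * x ^ k) (C * x ^ k) := by
        refine sum_le_sum fun k _ => ?_
        rw [← min_mul_of_nonneg _ _ (pow_nonneg hx0 k)]
        exact norm_grushinC_le hm hne h1 k
    _ ≤ ‖a‖⁻¹ * min (∑ k ∈ range N, ((k : ℝ) + 1) * x ^ k) (C * ∑ k ∈ range N, x ^ k) := by
        rw [← mul_sum, mul_sum _ _ C]
        gcongr
        exact le_min (sum_le_sum fun k _ => min_le_left _ _)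
          (sum_le_sum fun k _ => min_le_right _ _)
    _ ≤ ‖a‖⁻¹ * (A * min A C) := by
        rw [mul_min_of_nonneg _ _ hA0, mul_comm A C]
        have hT : ∑ k ∈ range N, ((k : ℝ) + 1) * x ^ k ≤ A * A :=
          (sum_succ_mul_pow_le hx0 h2 N).trans (mul_le_mul (hS.trans hA) hA (by positivity) hA0)
        gcongr ‖a‖⁻¹ * min ?_ (C * ?_)
        exact hS.trans hA
    _ = _ := by rw [min_assoc]

end Coefficients

section Blocks

variable {N : ℕ} {a ζp ζm : ℂ}

lemma sum_norm_grushinEblock_row_le (j : Fin N) :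
    ∑ k, ‖grushinEblock N a ζp ζm j k‖ ≤ ∑ m ∈ range N, ‖grushinC a ζp ζm m‖ := by
  simp only [grushinEblock, apply_ite norm, norm_zero, ← sum_filter]
  refine sum_comp_le_sum_of_injOn (σ := fun k : Fin N => (j : ℕ) - k - 1)
    (fun m => ‖grushinC a ζp ζm m‖) (fun _ _ => norm_nonneg _) ?_ ?_
  · intro k hk k' hk' h
    simp only [mem_coe, mem_filter, mem_univ, true_and] at hk hk' h
    ext
    omega
  · intro k hk
    simp only [mem_coe, mem_filter, mem_univ, true_and, mem_range] at hk ⊢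
    omega

lemma sum_norm_grushinEblock_col_le (k : Fin N) :
    ∑ j, ‖grushinEblock N a ζp ζm j k‖ ≤ ∑ m ∈ range N, ‖grushinC a ζp ζm m‖ := by
  simp only [grushinEblock, apply_ite norm, norm_zero, ← sum_filter]
  refine sum_comp_le_sum_of_injOn (σ := fun j : Fin N => (j : ℕ) - k - 1)
    (fun m => ‖grushinC a ζp ζm m‖) (fun _ _ => norm_nonneg _) ?_ ?_
  · intro j hj j' hj' h
    simp only [mem_coe, mem_filter, mem_univ, true_and] at hj hj' h
    ext
    omega
  · intro j hj
    simp only [mem_coe, mem_filter, mem_univ, true_and, mem_range] at hj ⊢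
    omega

lemma norm_toEuclideanCLM_grushinEblock_le :
    ‖Matrix.toEuclideanCLM (𝕜 := ℂ) (grushinEblock N a ζp ζm)‖
      ≤ ∑ m ∈ range N, ‖grushinC a ζp ζm m‖ :=
  Matrix.norm_toEuclideanCLM_le_of_sum_norm_le _ (sum_nonneg fun _ _ => norm_nonneg _)
    sum_norm_grushinEblock_row_le sum_norm_grushinEblock_col_le

lemma norm_grushinEp_eq_norm_grushinEm : ‖grushinEp N a ζp ζm‖ = ‖grushinEm N a ζp ζm‖ := by
  simp only [EuclideanSpace.norm_eq, grushinEp, grushinEm]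
  congr 1
  refine Fintype.sum_equiv Fin.revPerm _ _ fun j => ?_
  simp only [Fin.revPerm_apply, Fin.val_rev]
  congr 3
  omega

end Blocks

lemma EuclideanSpace.norm_le_sqrt_mul {𝕜 ι : Type*} [RCLike 𝕜] [Fintype ι]
    (v : EuclideanSpace 𝕜 ι) {M S : ℝ} (hM0 : 0 ≤ M) (hM : ∀ i, ‖v i‖ ≤ M)
    (hS : ∑ i, ‖v i‖ ≤ S) : ‖v‖ ≤ √(M * S) := by
  rw [EuclideanSpace.norm_eq]
  refine Real.sqrt_le_sqrt ?_
  calc ∑ i, ‖v i‖ ^ 2 ≤ ∑ i, M * ‖v i‖ :=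
        sum_le_sum fun i _ => by rw [sq]; exact mul_le_mul_of_nonneg_right (hM i) (norm_nonneg _)
    _ ≤ M * S := by rw [← mul_sum]; exact mul_le_mul_of_nonneg_left hS hM0

theorem grushin_block_estimates_general (N : ℕ) (a : ℂ)
    (ζp ζm : ℂ) (hm : ζm ≠ 0) (hne : ζp ≠ ζm)
    (h1 : ‖ζp‖ ≤ ‖ζm‖) (h2 : ‖ζm‖ < 1) :
    ‖Matrix.toEuclideanCLM (𝕜 := ℂ) (grushinEblock N a ζp ζm)‖
        ≤ ‖a‖⁻¹ * min (N : ℝ) (2 / (1 - ‖ζm‖)) *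
            min (N : ℝ) (min (2 / (1 - ‖ζm‖))
              (2 / ‖1 - ζp / ζm‖)) ∧
    ‖grushinEp N a ζp ζm‖ = ‖grushinEm N a ζp ζm‖ ∧
    ‖grushinEp N a ζp ζm‖
        ≤ ‖a‖⁻¹ * Real.sqrt (min (N : ℝ) (2 / (1 - ‖ζm‖))) *
            min (N : ℝ) (min (2 / (1 - ‖ζm‖))
              (2 / ‖1 - ζp / ζm‖)) := by
  set A := min (N : ℝ) (2 / (1 - ‖ζm‖))
  set B := min (N : ℝ) (min (2 / (1 - ‖ζm‖)) (2 / ‖1 - ζp / ζm‖))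
  have hsum : ∑ m ∈ range N, ‖grushinC a ζp ζm m‖ ≤ ‖a‖⁻¹ * (A * B) :=
    sum_norm_grushinC_le hm hne h1 h2 N
  have hB0 : 0 ≤ ‖a‖⁻¹ * B := mul_nonneg (inv_nonneg.2 (norm_nonneg a))
    (le_min N.cast_nonneg (le_min (div_nonneg zero_le_two (sub_pos.2 h2).le) (by positivity)))
  refine ⟨?_, norm_grushinEp_eq_norm_grushinEm, ?_⟩
  · rw [mul_assoc]
    exact norm_toEuclideanCLM_grushinEblock_le.trans hsum
  · calc ‖grushinEp N a ζp ζm‖ ≤ √(‖a‖⁻¹ * B * (‖a‖⁻¹ * (A * B))) :=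
          EuclideanSpace.norm_le_sqrt_mul _ hB0
            (fun j => norm_grushinC_le_of_lt hm hne h1 h2 j.isLt)
            ((Fin.sum_univ_eq_sum_range (fun m => ‖grushinC a ζp ζm m‖) N).trans_le hsum)
      _ = ‖a‖⁻¹ * √A * B := by
          rw [show ‖a‖⁻¹ * B * (‖a‖⁻¹ * (A * B)) = (‖a‖⁻¹ * B) ^ 2 * A by ring,
            Real.sqrt_mul (sq_nonneg _), Real.sqrt_sq hB0]
          ring

/-- Estimates on the blocks of the inverse Grushin problem when both roots lie
in the open unit disc:  `‖E‖ ≤ |a|⁻¹ min(N, 2/(1−|ζ₋|)) · min(N, 2/(1−|ζ₋|), 2/|1−ζ₊/ζ₋|)`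
and `‖E₊‖ = ‖E₋‖ ≤ |a|⁻¹ min(N, 2/(1−|ζ₋|))^{1/2} · min(N, 2/(1−|ζ₋|), 2/|1−ζ₊/ζ₋|)`. -/
theorem grushin_block_estimates (N : ℕ) (hN : 2 ≤ N) (a : ℂ) (ha : a ≠ 0)
    (ζp ζm : ℂ) (hp : ζp ≠ 0) (hm : ζm ≠ 0) (hne : ζp ≠ ζm)
    (h1 : ‖ζp‖ ≤ ‖ζm‖) (h2 : ‖ζm‖ < 1) :
    ‖Matrix.toEuclideanCLM (𝕜 := ℂ) (grushinEblock N a ζp ζm)‖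
        ≤ ‖a‖⁻¹ * min (N : ℝ) (2 / (1 - ‖ζm‖)) *
            min (N : ℝ) (min (2 / (1 - ‖ζm‖))
              (2 / ‖1 - ζp / ζm‖)) ∧
    ‖grushinEp N a ζp ζm‖ = ‖grushinEm N a ζp ζm‖ ∧
    ‖grushinEp N a ζp ζm‖
        ≤ ‖a‖⁻¹ * Real.sqrt (min (N : ℝ) (2 / (1 - ‖ζm‖))) *
            min (N : ℝ) (min (2 / (1 - ‖ζm‖))
              (2 / ‖1 - ζp / ζm‖)) :=
  grushin_block_estimates_general N a ζp ζm hm hne h1 h2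
end
end

section
/- Let M ≥ 1, let A be an invertible M×M complex matrix, let Q be any M×M complex matrix, and let δ ≥ 0 satisfy δ ‖Q‖ ‖A^{-1}‖ < 1, where ‖·‖ is the operator norm. Then A + δQ is invertible and | ln|det(A + δQ)| − ln|det A| | ≤ δ ‖A^{-1}‖ ‖Q‖_tr / (1 − δ ‖Q‖ ‖A^{-1}‖), where ‖Q‖_tr denotes the trace norm (sum of the singular values) of Q. -/
/-!
Along the segment `t ↦ A + tQ`, Jacobi's formula gives
`d/dt log |det (A + tQ)| = Re tr ((A + tQ)⁻¹ Q)`. For `0 ≤ t ≤ δ`, `A + tQ = A (1 + t A⁻¹ Q)` is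
invertible because `‖t A⁻¹ Q‖ < 1`, and the identity `(A + tQ)⁻¹ = A⁻¹ - t A⁻¹ Q (A + tQ)⁻¹`
gives `‖(A + tQ)⁻¹‖ ≤ ‖A⁻¹‖ / (1 - δ ‖Q‖ ‖A⁻¹‖)`. The duality `|tr (X Q)| ≤ ‖X‖ ‖Q‖_tr`, seen by
evaluating the trace in an orthonormal eigenbasis `(v j)` of `Qᴴ Q` (where the `‖Q v j‖` are the
singular values of `Q`), bounds the derivative, and the mean value theorem on `[0, δ]` concludes.
-/

noncomputable section

/-- The trace (nuclear) norm of a complex matrix: the sum of its singular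
values, i.e. of the square roots of the eigenvalues of `Qᴴ Q`. -/
def traceNorm {M : ℕ} (Q : Matrix (Fin M) (Fin M) ℂ) : ℝ :=
  ∑ i, Real.sqrt ((Matrix.isHermitian_conjTranspose_mul_self Q).eigenvalues i)

open scoped Ring Matrix.Norms.L2Operator InnerProductSpace

section NormedRing

variable {R : Type*} [NormedRing R] {a x : R}

theorem isUnit_add_of_norm_inverse_mul_norm_lt_one [HasSummableGeomSeries R] (ha : IsUnit a)
    (h : ‖a⁻¹ʳ‖ * ‖x‖ < 1) : IsUnit (a + x) := by
  have hy : ‖-(a⁻¹ʳ * x)‖ < 1 := by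
    rw [norm_neg]; exact (norm_mul_le _ _).trans_lt h
  have : a + x = a * (1 - -(a⁻¹ʳ * x)) := by
    rw [sub_neg_eq_add, mul_add, mul_one, Ring.mul_inverse_cancel_left _ _ ha]
  rw [this]
  exact ha.mul (isUnit_one_sub_of_norm_lt_one hy)

theorem norm_inverse_add_le {c : ℝ} (ha : IsUnit a) (hax : IsUnit (a + x))
    (hc : ‖a⁻¹ʳ‖ * ‖x‖ ≤ c) (hc1 : c < 1) :
    ‖(a + x)⁻¹ʳ‖ ≤ ‖a⁻¹ʳ‖ / (1 - c) := by
  set u := (a + x)⁻¹ʳ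
  have hu : u = a⁻¹ʳ - a⁻¹ʳ * x * u := by
    have : a⁻¹ʳ * (a + x) * u = a⁻¹ʳ := by
      rw [mul_assoc, Ring.mul_inverse_cancel _ hax, mul_one]
    rw [mul_add, Ring.inverse_mul_cancel _ ha, add_mul, one_mul] at this
    exact eq_sub_of_add_eq this
  have hle : ‖u‖ ≤ ‖a⁻¹ʳ‖ + c * ‖u‖ :=
    calc ‖u‖ = ‖a⁻¹ʳ - a⁻¹ʳ * x * u‖ := by rw [← hu]
      _ ≤ ‖a⁻¹ʳ‖ + ‖a⁻¹ʳ‖ * ‖x‖ * ‖u‖ :=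
        (norm_sub_le _ _).trans (by gcongr; exact norm_mul₃_le)
      _ ≤ ‖a⁻¹ʳ‖ + c * ‖u‖ := by gcongr
  rw [le_div_iff₀ (by linarith)]
  linarith

end NormedRing

theorem HasDerivAt.log_norm {f : ℝ → ℂ} {f' : ℂ} {x : ℝ} (hf : HasDerivAt f f' x)
    (hx : f x ≠ 0) : HasDerivAt (fun y => Real.log ‖f y‖) (f' / f x).re x := by
  have hd := ((hf.norm_sq).log (by positivity)).div_const 2
  have hfun : (fun y => Real.log ‖f y‖) = fun y => Real.log (‖f y‖ ^ 2) / 2 := by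
    funext y; rw [Real.log_pow]; ring
  rw [hfun]
  refine hd.congr_deriv ?_
  rw [Complex.div_re, Complex.sq_norm, Complex.inner]
  simp only [Complex.mul_re, Complex.conj_re, Complex.conj_im]
  field_simp
  ring

theorem traceNorm_nonneg {M : ℕ} (Q : Matrix (Fin M) (Fin M) ℂ) : 0 ≤ traceNorm Q :=
  Finset.sum_nonneg fun _ _ => Real.sqrt_nonneg _

namespace Matrix

variable {𝕜 n : Type*} [Fintype n] [DecidableEq n]

section NontriviallyNormedField

variable [NontriviallyNormedField 𝕜]

theorem hasDerivAt_det_one_add_smul (B : Matrix n n 𝕜) :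
    HasDerivAt (fun r : 𝕜 => (1 + r • B).det) B.trace 0 := by
  have heval : ∀ r : 𝕜, (1 + r • B).det =
      (det (1 + (Polynomial.X : Polynomial 𝕜) • B.map Polynomial.C)).eval r := by
    intro r
    rw [← Polynomial.coe_evalRingHom, RingHom.map_det]
    congr 1
    ext i j
    simp [Matrix.one_apply, apply_ite, mul_comm r]
  rw [funext heval, ← derivative_det_one_add_X_smul]
  exact Polynomial.hasDerivAt _ 0

theorem hasDerivAt_det_add_smul {A Q : Matrix n n 𝕜} {t : 𝕜}
    (h : IsUnit (A + t • Q)) :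
    HasDerivAt (fun s : 𝕜 => (A + s • Q).det)
      ((A + t • Q).det * ((A + t • Q)⁻¹ * Q).trace) t := by
  set B := A + t • Q
  have hfactor : ∀ s : 𝕜, A + s • Q = B * (1 + (s - t) • (B⁻¹ * Q)) := by
    intro s
    rw [mul_add, mul_one, Matrix.mul_smul,
      mul_nonsing_inv_cancel_left _ _ ((isUnit_iff_isUnit_det B).mp h)]
    simp only [B, sub_smul]; abel
  have hd := HasDerivAt.comp_sub_const t t
    (by rw [sub_self]; exact hasDerivAt_det_one_add_smul (B⁻¹ * Q))
  simpa only [hfactor, det_mul] using hd.const_mul B.det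

end NontriviallyNormedField

theorem hasDerivAt_log_norm_det_add_smul {A Q : Matrix n n ℂ} {t : ℝ}
    (h : IsUnit (A + (t : ℂ) • Q)) :
    HasDerivAt (fun s : ℝ => Real.log ‖(A + (s : ℂ) • Q).det‖)
      ((A + (t : ℂ) • Q)⁻¹ * Q).trace.re t := by
  have hdet : (A + (t : ℂ) • Q).det ≠ 0 := ((isUnit_iff_isUnit_det _).mp h).ne_zero
  simpa only [mul_div_cancel_left₀ _ hdet] using
    HasDerivAt.log_norm (hasDerivAt_det_add_smul h).comp_ofReal hdet

section RCLike

variable [RCLike 𝕜]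

theorem trace_eq_sum_inner_toEuclideanCLM {ι : Type*} [Fintype ι] (A : Matrix n n 𝕜)
    (b : OrthonormalBasis ι 𝕜 (EuclideanSpace 𝕜 n)) :
    A.trace = ∑ i, ⟪b i, toEuclideanCLM (𝕜 := 𝕜) A (b i)⟫_𝕜 := by
  rw [← trace_toLin_eq A (EuclideanSpace.basisFun n 𝕜).toBasis,
    ← toEuclideanLin_eq_toLin_orthonormal]
  exact LinearMap.trace_eq_sum_inner _ b

theorem norm_toEuclideanCLM_eigenvectorBasis_sq (Q : Matrix n n 𝕜) (j : n) :
    ‖toEuclideanCLM (𝕜 := 𝕜) Q ((isHermitian_conjTranspose_mul_self Q).eigenvectorBasis j)‖ ^ 2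
      = (isHermitian_conjTranspose_mul_self Q).eigenvalues j := by
  set hH := isHermitian_conjTranspose_mul_self Q
  set v := hH.eigenvectorBasis j
  set T := toEuclideanCLM (𝕜 := 𝕜) Q
  have hv : toEuclideanCLM (𝕜 := 𝕜) (Qᴴ * Q) v = (hH.eigenvalues j : 𝕜) • v := by
    ext i
    simpa only [ofLp_toEuclideanCLM, RCLike.real_smul_eq_coe_smul (K := 𝕜), WithLp.ofLp_smul]
      using congrFun (hH.mulVec_eigenvectorBasis j) i
  have hinner : ⟪T v, T v⟫_𝕜 = ⟪v, toEuclideanCLM (𝕜 := 𝕜) (Qᴴ * Q) v⟫_𝕜 := by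
    rw [map_mul, ← star_eq_conjTranspose, map_star, mul_apply_eq_comp,
      ContinuousLinearMap.star_eq_adjoint, ContinuousLinearMap.adjoint_inner_right]
  rw [hv, inner_smul_right, inner_self_eq_norm_sq_to_K, inner_self_eq_norm_sq_to_K,
    hH.eigenvectorBasis.orthonormal.1 j] at hinner
  exact_mod_cast (by simpa using hinner : ((‖T v‖ ^ 2 : ℝ) : 𝕜) = hH.eigenvalues j)

end RCLike

theorem norm_trace_mul_le_norm_mul_traceNorm {M : ℕ} (X Q : Matrix (Fin M) (Fin M) ℂ) :
    ‖(X * Q).trace‖ ≤ ‖X‖ * traceNorm Q := by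
  set v := (isHermitian_conjTranspose_mul_self Q).eigenvectorBasis
  rw [trace_eq_sum_inner_toEuclideanCLM _ v, traceNorm, Finset.mul_sum]
  refine (norm_sum_le _ _).trans (Finset.sum_le_sum fun j _ => ?_)
  calc ‖⟪v j, toEuclideanCLM (𝕜 := ℂ) (X * Q) (v j)⟫_ℂ‖
      ≤ ‖v j‖ * ‖toEuclideanCLM (𝕜 := ℂ) X (toEuclideanCLM (𝕜 := ℂ) Q (v j))‖ :=
        by rw [map_mul]; exact norm_inner_le_norm _ _
    _ ≤ ‖X‖ * ‖toEuclideanCLM (𝕜 := ℂ) Q (v j)‖ := by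
        rw [v.orthonormal.1 j, one_mul]; exact (toEuclideanCLM (𝕜 := ℂ) X).le_opNorm _
    _ = _ := by rw [← norm_toEuclideanCLM_eigenvectorBasis_sq, Real.sqrt_sq (norm_nonneg _)]

end Matrix

theorem logdet_perturbation_general (M : ℕ)
    (A Q : Matrix (Fin M) (Fin M) ℂ) (hA : IsUnit A) (δ : ℝ) (hδ : 0 ≤ δ)
    (h : δ * ‖Matrix.toEuclideanCLM (𝕜 := ℂ) Q‖
          * ‖Matrix.toEuclideanCLM (𝕜 := ℂ) A⁻¹‖ < 1) :
    IsUnit (A + (δ : ℂ) • Q) ∧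
    |Real.log ‖(A + (δ : ℂ) • Q).det‖
        - Real.log ‖A.det‖|
      ≤ δ * ‖Matrix.toEuclideanCLM (𝕜 := ℂ) A⁻¹‖ * traceNorm Q /
          (1 - δ * ‖Matrix.toEuclideanCLM (𝕜 := ℂ) Q‖
            * ‖Matrix.toEuclideanCLM (𝕜 := ℂ) A⁻¹‖) := by
  simp only [← Matrix.cstar_norm_def, Matrix.nonsing_inv_eq_ringInverse A] at h ⊢
  set ε := δ * ‖Q‖ * ‖A⁻¹ʳ‖
  have hsmall : ∀ t ∈ Set.Icc 0 δ, ‖A⁻¹ʳ‖ * ‖(t : ℂ) • Q‖ ≤ ε := fun t ⟨ht0, htδ⟩ => by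
    rw [norm_smul, Complex.norm_real, Real.norm_of_nonneg ht0]
    calc ‖A⁻¹ʳ‖ * (t * ‖Q‖) ≤ ‖A⁻¹ʳ‖ * (δ * ‖Q‖) := by gcongr
      _ = ε := by ring
  have hunit : ∀ t ∈ Set.Icc 0 δ, IsUnit (A + (t : ℂ) • Q) := fun t ht =>
    isUnit_add_of_norm_inverse_mul_norm_lt_one hA ((hsmall t ht).trans_lt h)
  have hbound : ∀ t ∈ Set.Icc 0 δ,
      ‖((A + (t : ℂ) • Q)⁻¹ * Q).trace.re‖ ≤ ‖A⁻¹ʳ‖ / (1 - ε) * traceNorm Q := fun t ht =>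
    calc _ ≤ ‖((A + (t : ℂ) • Q)⁻¹ * Q).trace‖ := Complex.abs_re_le_norm _
      _ ≤ ‖(A + (t : ℂ) • Q)⁻¹‖ * traceNorm Q := Matrix.norm_trace_mul_le_norm_mul_traceNorm _ _
      _ ≤ _ := by
        rw [Matrix.nonsing_inv_eq_ringInverse]
        gcongr
        · exact traceNorm_nonneg Q
        · exact norm_inverse_add_le hA (hunit t ht) (hsmall t ht) h
  have hmvt := (convex_Icc 0 δ).norm_image_sub_le_of_norm_hasDerivWithin_le
    (fun t ht => (Matrix.hasDerivAt_log_norm_det_add_smul (hunit t ht)).hasDerivWithinAt)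
    hbound (Set.left_mem_Icc.mpr hδ) (Set.right_mem_Icc.mpr hδ)
  simp only [Complex.ofReal_zero, zero_smul, add_zero, sub_zero, Real.norm_eq_abs,
    abs_of_nonneg hδ] at hmvt
  exact ⟨hunit δ (Set.right_mem_Icc.mpr hδ), hmvt.trans_eq (by ring)⟩

/-- If `A` is invertible and `δ ‖Q‖ ‖A⁻¹‖ < 1` (operator norms with respect to
the Euclidean norm), then `A + δQ` is invertible and
`| ln|det(A + δQ)| − ln|det A| | ≤ δ ‖A⁻¹‖ ‖Q‖_tr / (1 − δ ‖Q‖ ‖A⁻¹‖)`. -/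
theorem logdet_perturbation (M : ℕ) (hM : 1 ≤ M)
    (A Q : Matrix (Fin M) (Fin M) ℂ) (hA : IsUnit A) (δ : ℝ) (hδ : 0 ≤ δ)
    (h : δ * ‖Matrix.toEuclideanCLM (𝕜 := ℂ) Q‖
          * ‖Matrix.toEuclideanCLM (𝕜 := ℂ) A⁻¹‖ < 1) :
    IsUnit (A + (δ : ℂ) • Q) ∧
    |Real.log ‖(A + (δ : ℂ) • Q).det‖
        - Real.log ‖A.det‖|
      ≤ δ * ‖Matrix.toEuclideanCLM (𝕜 := ℂ) A⁻¹‖ * traceNorm Q /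
          (1 - δ * ‖Matrix.toEuclideanCLM (𝕜 := ℂ) Q‖
            * ‖Matrix.toEuclideanCLM (𝕜 := ℂ) A⁻¹‖) :=
  logdet_perturbation_general M A Q hA δ hδ h
end
end
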